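/- arXiv:2201.13187 — 4 statements merged into one kernel-verified Lean document; each statement's English description precedes it below -/
import Mathlib

section
/- Let (A, B, E, E') be a C*-operator-valued infinitesimal probability space, let x = x* ∈ A, and set X = [[x, 0], [0, x]] ∈ Ã. Then for all b, c ∈ B with (‖b‖ + ‖c‖)·‖x‖ < 1, the element I − [[b, c], [0, b]] X is invertible in Ã and Ψ_X([[b, c], [0, b]]) := Ẽ((I − [[b, c], [0, b]] X)⁻¹ − I) = [[ψ_x(b), (Dψ_x)(b)(c) + ∂ψ_x(b)], [0, ψ_x(b)]], where Dψ_x is the Fréchet derivative of ψ_x. -/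
open scoped BigOperators

variable {A B : Type*} [CStarAlgebra A] [CStarAlgebra B]

/-- `(A, B, E, E')` is a C*-operator-valued infinitesimal probability space, where the unital
C*-subalgebra `B ⊆ A` is realized via the isometric unital star-algebra embedding `ι : B → A`:
`E` is a bounded, completely positive, `B`-`B`-bimodule linear map with `E 1 = 1`, and `E'` is a
bounded, selfadjoint, `B`-`B`-bimodule linear map with `E' 1 = 0`. -/
structure IsCStarOVIProbSpace (ι : B →⋆ₐ[ℂ] A) (E E' : A →L[ℂ] B) : Prop where
  isometry : Isometry ι
  E_one : E 1 = 1
  E_bimod : ∀ (b₁ b₂ : B) (a : A), E (ι b₁ * a * ι b₂) = b₁ * E a * b₂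
  E_cp : ∀ (n : ℕ) (M : Matrix (Fin n) (Fin n) A),
      (∃ N : Matrix (Fin n) (Fin n) A, M = star N * N) →
      ∃ N' : Matrix (Fin n) (Fin n) B, M.map ⇑E = star N' * N'
  E'_one : E' 1 = 0
  E'_selfadj : ∀ a : A, E' (star a) = star (E' a)
  E'_bimod : ∀ (b₁ b₂ : B) (a : A), E' (ι b₁ * a * ι b₂) = b₁ * E' a * b₂

/-- `ψ_z(b) = E((1 − bz)⁻¹ − 1)`. -/
noncomputable def psiT (ι : B →⋆ₐ[ℂ] A) (E : A →L[ℂ] B) (z : A) (b : B) : B :=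
  E (Ring.inverse (1 - ι b * z) - 1)

/-- `∂ψ_z(b) = E'((1 − bz)⁻¹ − 1)`. -/
noncomputable def dpsiT (ι : B →⋆ₐ[ℂ] A) (E' : A →L[ℂ] B) (z : A) (b : B) : B :=
  E' (Ring.inverse (1 - ι b * z) - 1)

open TrivSqZeroExt

/-- The map `Ẽ : Ã → B̃`, `[[a, a'], [0, a]] ↦ [[E a, E' a + E a'], [0, E a]]`, where the upper
triangular algebra `Ã` (of matrices `[[a, a'], [0, a]]`) is realized as the trivial square-zero
extension `TrivSqZeroExt A A`. -/
noncomputable def tildeE (E E' : A →L[ℂ] B) (p : TrivSqZeroExt A A) : TrivSqZeroExt B B :=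
  inl (E p.fst) + inr (E' p.fst + E p.snd)

/-- The embedding of `B̃` into `Ã` induced by `ι`. -/
noncomputable def tildeIota (ι : B →⋆ₐ[ℂ] A) (p : TrivSqZeroExt B B) : TrivSqZeroExt A A :=
  inl (ι p.fst) + inr (ι p.snd)

/-- For a C*-operator-valued infinitesimal probability space `(A, B, E, E')`, a selfadjoint
`x ∈ A` and `X = [[x, 0], [0, x]]`, for all `b, c ∈ B` with `(‖b‖ + ‖c‖)·‖x‖ < 1` the element
`I − [[b, c], [0, b]] X` is invertible in `Ã` and
`Ψ_X([[b, c], [0, b]]) = [[ψ_x(b), (Dψ_x)(b)(c) + ∂ψ_x(b)], [0, ψ_x(b)]]`. -/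
theorem psi_upper_triangular
    (ι : B →⋆ₐ[ℂ] A) (E E' : A →L[ℂ] B) (h : IsCStarOVIProbSpace ι E E')
    (x : A) (hx : star x = x) (b c : B) (hbc : (‖b‖ + ‖c‖) * ‖x‖ < 1) :
    IsUnit (1 - tildeIota ι (inl b + inr c) * inl x) ∧
    DifferentiableAt ℂ (psiT ι E x) b ∧
    tildeE E E' (Ring.inverse (1 - tildeIota ι (inl b + inr c) * inl x) - 1) =
      inl (psiT ι E x b) + inr (fderiv ℂ (psiT ι E x) b c + dpsiT ι E' x b) := by

  classical
  -- norm estimate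
  have hnorm : ‖ι b * x‖ < 1 := by
    calc ‖ι b * x‖ ≤ ‖ι b‖ * ‖x‖ := norm_mul_le _ _
      _ = ‖b‖ * ‖x‖ := by
          rw [h.isometry.norm_map_of_map_zero (map_zero ι)]
      _ ≤ (‖b‖ + ‖c‖) * ‖x‖ := by nlinarith [norm_nonneg c, norm_nonneg x]
      _ < 1 := hbc
  have hu : IsUnit (1 - ι b * x) := isUnit_one_sub_of_norm_lt_one hnorm
  set e : TrivSqZeroExt A A := 1 - tildeIota ι (inl b + inr c) * inl x with he
  have hefst : e.fst = 1 - ι b * x := by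
    simp [he, tildeIota]
  have hesnd : e.snd = -(ι c * x) := by
    simp [he, tildeIota, op_smul_eq_mul]
  have heunit : IsUnit e := by
    rw [TrivSqZeroExt.isUnit_iff_isUnit_fst, hefst]; exact hu
  letI iu : Invertible (1 - ι b * x) := hu.invertible
  letI iefst : Invertible e.fst := by rw [hefst]; exact iu
  letI ie : Invertible e := TrivSqZeroExt.invertibleOfInvertibleFst e
  have hinvfst : ⅟(e.fst) = Ring.inverse (1 - ι b * x) := by
    rw [← Ring.inverse_invertible e.fst, hefst]
  have hrfst : (Ring.inverse e).fst = Ring.inverse (1 - ι b * x) := by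
    rw [Ring.inverse_invertible, TrivSqZeroExt.fst_invOf, hinvfst]
  have hrsnd : (Ring.inverse e).snd =
      Ring.inverse (1 - ι b * x) * (ι c * x) * Ring.inverse (1 - ι b * x) := by
    rw [Ring.inverse_invertible, TrivSqZeroExt.snd_invOf, hesnd, hinvfst]
    simp [op_smul_eq_mul, mul_assoc]
  -- the derivative
  let ιL : B →L[ℂ] A := ⟨ι.toAlgHom.toLinearMap, h.isometry.continuous⟩
  have hfd : HasFDerivAt (fun b' : B => 1 - ι b' * x) (-(ιL.smulRight x)) b :=
    HasFDerivAt.const_sub (ιL.hasFDerivAt.mul_const' x) 1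
  have hinv : HasFDerivAt (fun b' : B => Ring.inverse (1 - ι b' * x))
      ((-ContinuousLinearMap.mulLeftRight ℂ A ↑hu.unit⁻¹ ↑hu.unit⁻¹).comp
        (-(ιL.smulRight x))) b := by
    have h2 := hasFDerivAt_ringInverse (𝕜 := ℂ) hu.unit
    rw [hu.unit_spec] at h2
    exact h2.comp b hfd
  have hD : HasFDerivAt (psiT ι E x)
      (E.comp ((-ContinuousLinearMap.mulLeftRight ℂ A ↑hu.unit⁻¹
        ↑hu.unit⁻¹).comp (-(ιL.smulRight x)))) b :=
    E.hasFDerivAt.comp b (hinv.sub_const 1)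
  have hv : (↑hu.unit⁻¹ : A) = Ring.inverse (1 - ι b * x) := by
    rw [← Ring.inverse_unit, hu.unit_spec]
  have hfderiv : fderiv ℂ (psiT ι E x) b c =
      E (Ring.inverse (1 - ι b * x) * (ι c * x) * Ring.inverse (1 - ι b * x)) := by
    rw [hD.fderiv]
    simp [ContinuousLinearMap.mulLeftRight_apply, hv, smul_eq_mul, mul_assoc]
    rfl
  refine ⟨heunit, hD.differentiableAt, ?_⟩
  ext
  · simp only [tildeE, fst_add, fst_inl, fst_inr, add_zero, fst_sub, fst_one, hrfst]
    rfl
  · simp only [tildeE, snd_add, snd_inl, snd_inr, zero_add, snd_sub, snd_one, sub_zero,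
      fst_sub, fst_one, hrfst, hrsnd, hfderiv]
    rw [add_comm]
    rfl
end

section
/- Let (A, B, E, E') be a C*-operator-valued infinitesimal probability space, let x = x* ∈ A, and set X = [[x, 0], [0, x]] ∈ Ã. Then for all b, c ∈ B with (‖b‖ + ‖c‖)·‖x‖ < 1, the element I − [[b, c], [0, b]] X is invertible in Ã and ϑ_X([[b, c], [0, b]]) := Ẽ((I − [[b, c], [0, b]] X)⁻¹ [[b, c], [0, b]] X) = [[ϑ_x(b), (Dϑ_x)(b)(c) + ∂ϑ_x(b)], [0, ϑ_x(b)]], where Dϑ_x is the Fréchet derivative of ϑ_x and ∂ϑ_x(b) = E'((1 − bx)⁻¹ bx). -/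
open scoped BigOperators

variable {A B : Type*} [CStarAlgebra A] [CStarAlgebra B]

/-- `ϑ_z(b) = E((1 − bz)⁻¹ bz)`. -/
noncomputable def thetaT (ι : B →⋆ₐ[ℂ] A) (E : A →L[ℂ] B) (z : A) (b : B) : B :=
  E (Ring.inverse (1 - ι b * z) * (ι b * z))

/-- The κ-transform `κ_z(b) = (1 + ϑ_z(b))⁻¹ ϑ_z(b)`. -/
noncomputable def kappaT (ι : B →⋆ₐ[ℂ] A) (E : A →L[ℂ] B) (z : A) (b : B) : B :=
  Ring.inverse (1 + thetaT ι E z b) * thetaT ι E z b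

/-- `∂ϑ_z(b) = E'((1 − bz)⁻¹ bz)`. -/
noncomputable def dthetaT (ι : B →⋆ₐ[ℂ] A) (E' : A →L[ℂ] B) (z : A) (b : B) : B :=
  E' (Ring.inverse (1 - ι b * z) * (ι b * z))

/-- The infinitesimal κ-transform `∂κ_z(b) = (1 + ϑ_z(b))⁻¹ ∂ϑ_z(b) (1 + ϑ_z(b))⁻¹`. -/
noncomputable def dkappaT (ι : B →⋆ₐ[ℂ] A) (E E' : A →L[ℂ] B) (z : A) (b : B) : B :=
  Ring.inverse (1 + thetaT ι E z b) * dthetaT ι E' z b * Ring.inverse (1 + thetaT ι E z b)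

open TrivSqZeroExt

/-! The upper triangular algebra is the square-zero extension `A ⊕ εA`, in which `1 - (u + εv)` is
invertible as soon as `1 - u` is, with inverse `r + ε r v r` for `r = (1 - u)⁻¹`. Since
`(1 - P)⁻¹ P = (1 - P)⁻¹ - 1`, the components of `(1 - P)⁻¹ P` are `r u` and `r v r`. On the other
hand `ϑ_x(b') = E((1 - b'x)⁻¹) - E 1` near `b`, and inversion has derivative `h ↦ -r h r` at
`1 - bx`, so `Dϑ_x(b)(c) = E(r (cx) r)`: applying `Ẽ` gives the claimed matrix. -/

lemma Ring.inverse_one_sub_mul_self {R : Type*} [Ring R] {y : R} (h : IsUnit (1 - y)) :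
    Ring.inverse (1 - y) * y = Ring.inverse (1 - y) - 1 := by
  rw [eq_sub_iff_add_eq]
  calc Ring.inverse (1 - y) * y + 1
      = Ring.inverse (1 - y) * y + Ring.inverse (1 - y) * (1 - y) := by
        rw [Ring.inverse_mul_cancel _ h]
    _ = Ring.inverse (1 - y) := by rw [mul_sub, mul_one, add_sub_cancel]

section Resolvent

open ContinuousLinearMap

variable {𝕜 F R : Type*} [NontriviallyNormedField 𝕜] [NormedAddCommGroup F] [NormedSpace 𝕜 F]
  [NormedRing R] [HasSummableGeomSeries R] [NormedAlgebra 𝕜 R]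

theorem HasFDerivAt.ringInverse_one_sub_mul_self {g : F → R} {g' : F →L[𝕜] R} {e : F}
    (hg : HasFDerivAt g g' e) (he : IsUnit (1 - g e)) :
    HasFDerivAt (fun e' => Ring.inverse (1 - g e') * g e')
      ((mulLeftRight 𝕜 R (Ring.inverse (1 - g e)) (Ring.inverse (1 - g e))).comp g') e := by
  have hunits : ∀ᶠ e' in nhds e, IsUnit (1 - g e') :=
    (continuousAt_const.sub hg.continuousAt).eventually (Units.isOpen.mem_nhds he)
  have hinv : HasFDerivAt (fun e' => Ring.inverse (1 - g e') - 1)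
      ((mulLeftRight 𝕜 R (Ring.inverse (1 - g e)) (Ring.inverse (1 - g e))).comp g') e := by
    have := (hasFDerivAt_ringInverse (𝕜 := 𝕜) he.unit).comp e ((hasFDerivAt_const 1 e).sub hg)
    rw [← he.unit_spec, Ring.inverse_unit]
    simpa using this.sub_const 1
  refine hinv.congr_of_eventuallyEq ?_
  filter_upwards [hunits] with e' he' using Ring.inverse_one_sub_mul_self he'

end Resolvent

open scoped RightActions

namespace TrivSqZeroExt

variable {R M : Type*} [Ring R] [AddCommGroup M] [Module R M] [Module Rᵐᵒᵖ M]
  [SMulCommClass R Rᵐᵒᵖ M]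

theorem fst_ringInverse (x : TrivSqZeroExt R M) : (Ring.inverse x).fst = Ring.inverse x.fst := by
  by_cases hx : IsUnit x.fst
  · let := hx.invertible
    let := invertibleOfInvertibleFst x
    rw [Ring.inverse_invertible, Ring.inverse_invertible, fst_invOf]
  · rw [Ring.inverse_non_unit _ hx, Ring.inverse_non_unit _ (mt isUnit_iff_isUnit_fst.1 hx),
      fst_zero]

theorem snd_ringInverse (x : TrivSqZeroExt R M) :
    (Ring.inverse x).snd = -(Ring.inverse x.fst •> x.snd <• Ring.inverse x.fst) := by
  by_cases hx : IsUnit x.fst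
  · let := hx.invertible
    let := invertibleOfInvertibleFst x
    rw [Ring.inverse_invertible, Ring.inverse_invertible, snd_invOf]
  · rw [Ring.inverse_non_unit _ hx, Ring.inverse_non_unit _ (mt isUnit_iff_isUnit_fst.1 hx),
      snd_zero, zero_smul, smul_zero, neg_zero]

theorem ringInverse_one_sub_mul_self {x : TrivSqZeroExt R M} (hx : IsUnit (1 - x.fst)) :
    Ring.inverse (1 - x) * x =
      inl (Ring.inverse (1 - x.fst) * x.fst) +
        inr (Ring.inverse (1 - x.fst) •> x.snd <• Ring.inverse (1 - x.fst)) := by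
  have hx' : IsUnit (1 - x) := isUnit_iff_isUnit_fst.2 (by rwa [fst_sub, fst_one])
  rw [Ring.inverse_one_sub_mul_self hx', Ring.inverse_one_sub_mul_self hx]
  ext
  · simp [fst_ringInverse]
  · simp [snd_ringInverse]

end TrivSqZeroExt

noncomputable def StarAlgHom.toContinuousLinearMap (ι : B →⋆ₐ[ℂ] A) : B →L[ℂ] A :=
  (ι : B →ₗ[ℂ] A).mkContinuous 1 fun b => by
    simpa using NonUnitalStarAlgHom.norm_apply_le ι b

@[simp]
theorem StarAlgHom.toContinuousLinearMap_apply (ι : B →⋆ₐ[ℂ] A) (b : B) :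
    ι.toContinuousLinearMap b = ι b :=
  rfl

open ContinuousLinearMap in
theorem hasFDerivAt_thetaT (ι : B →⋆ₐ[ℂ] A) (E : A →L[ℂ] B) (x : A) {b : B}
    (hb : IsUnit (1 - ι b * x)) :
    HasFDerivAt (thetaT ι E x)
      (E.comp ((mulLeftRight ℂ A (Ring.inverse (1 - ι b * x)) (Ring.inverse (1 - ι b * x))).comp
        (((mul ℂ A).flip x).comp ι.toContinuousLinearMap))) b :=
  E.hasFDerivAt.comp b <|
    (((mul ℂ A).flip x).comp ι.toContinuousLinearMap).hasFDerivAt.ringInverse_one_sub_mul_self hb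

theorem theta_upper_triangular_general
    (ι : B →⋆ₐ[ℂ] A) (E E' : A →L[ℂ] B)
    (x : A) (b c : B) (hbc : (‖b‖ + ‖c‖) * ‖x‖ < 1) :
    IsUnit (1 - tildeIota ι (inl b + inr c) * inl x) ∧
    DifferentiableAt ℂ (thetaT ι E x) b ∧
    tildeE E E' (Ring.inverse (1 - tildeIota ι (inl b + inr c) * inl x) *
        (tildeIota ι (inl b + inr c) * inl x)) =
      inl (thetaT ι E x b) + inr (fderiv ℂ (thetaT ι E x) b c + dthetaT ι E' x b) := by
  have hb : IsUnit (1 - ι b * x) := by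
    refine isUnit_one_sub_of_norm_lt_one ((norm_mul_le _ _).trans_lt ?_)
    calc ‖ι b‖ * ‖x‖ ≤ ‖b‖ * ‖x‖ := by gcongr; exact NonUnitalStarAlgHom.norm_apply_le ι b
      _ ≤ (‖b‖ + ‖c‖) * ‖x‖ := by gcongr; exact le_add_of_nonneg_right (norm_nonneg c)
      _ < 1 := hbc
  have hθ := hasFDerivAt_thetaT ι E x hb
  have hX : tildeIota ι (inl b + inr c) * inl x = inl (ι b * x) + inr (ι c * x) := by
    ext <;> simp [tildeIota]
  rw [hX]
  refine ⟨isUnit_iff_isUnit_fst.2 (by simpa using hb), hθ.differentiableAt, ?_⟩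
  rw [ringInverse_one_sub_mul_self (by simpa using hb), hθ.fderiv]
  ext <;> simp [tildeE, thetaT, dthetaT, add_comm]

/-- For a C*-operator-valued infinitesimal probability space `(A, B, E, E')`, a selfadjoint
`x ∈ A` and `X = [[x, 0], [0, x]]`, for all `b, c ∈ B` with `(‖b‖ + ‖c‖)·‖x‖ < 1` the element
`I − [[b, c], [0, b]] X` is invertible in `Ã` and
`ϑ_X([[b, c], [0, b]]) = [[ϑ_x(b), (Dϑ_x)(b)(c) + ∂ϑ_x(b)], [0, ϑ_x(b)]]`. -/
theorem theta_upper_triangular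
    (ι : B →⋆ₐ[ℂ] A) (E E' : A →L[ℂ] B) (h : IsCStarOVIProbSpace ι E E')
    (x : A) (hx : star x = x) (b c : B) (hbc : (‖b‖ + ‖c‖) * ‖x‖ < 1) :
    IsUnit (1 - tildeIota ι (inl b + inr c) * inl x) ∧
    DifferentiableAt ℂ (thetaT ι E x) b ∧
    tildeE E E' (Ring.inverse (1 - tildeIota ι (inl b + inr c) * inl x) *
        (tildeIota ι (inl b + inr c) * inl x)) =
      inl (thetaT ι E x b) + inr (fderiv ℂ (thetaT ι E x) b c + dthetaT ι E' x b) :=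
  theta_upper_triangular_general ι E E' x b c hbc
end

section
/- Let (A, B, E) be a C*-operator-valued probability space, let M > 0, and let t ↦ x_t and t ↦ y_t be maps from ℝ to A, differentiable in the norm of A, such that x_t = x_t*, y_t = y_t*, ‖x_t‖ ≤ M and ‖y_t‖ ≤ M for all t, and such that for every t the ordered pair (x_t − 1, y_t) is monotone independent over B. Then there exists δ > 0 such that for every b ∈ B with ‖b‖ < δ and every t ∈ ℝ: the transforms κ_{y_t}(b), κ_{x_t}(κ_{y_t}(b)), κ_{y_t x_t}(b) are defined, the relevant functions of t are differentiable, and (d/dt) κ_{y_t x_t}(b) = (Dκ_{x_t})(κ_{y_t}(b))((d/dt) κ_{y_t}(b)) + (∂/∂t κ_{x_t}(w))|_{w = κ_{y_t}(b)}, where Dκ_{x_t} denotes the Fréchet derivative of w ↦ κ_{x_t}(w) and (∂/∂t κ_{x_t}(w))|_{w = κ_{y_t}(b)} is the derivative in t of s ↦ κ_{x_s}(w) evaluated at s = t and w = κ_{y_t}(b). -/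
open scoped BigOperators

variable {A B : Type*} [CStarAlgebra A] [CStarAlgebra B]

structure IsCStarOVProbSpace (ι : B →⋆ₐ[ℂ] A) (E : A →L[ℂ] B) : Prop where
  isometry : Isometry ι
  E_one : E 1 = 1
  E_bimod : ∀ (b₁ b₂ : B) (a : A), E (ι b₁ * a * ι b₂) = b₁ * E a * b₂
  E_cp : ∀ (n : ℕ) (M : Matrix (Fin n) (Fin n) A),
      (∃ N : Matrix (Fin n) (Fin n) A, M = star N * N) →
      ∃ N' : Matrix (Fin n) (Fin n) B, M.map ⇑E = star N' * N'

noncomputable def bimodGen (ι : B →⋆ₐ[ℂ] A) (x : A) : NonUnitalSubalgebra ℂ A :=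
  NonUnitalAlgebra.adjoin ℂ {a : A | ∃ b₁ b₂ : B, a = ι b₁ * x * ι b₂}

def MonotoneIndepPair (ι : B →⋆ₐ[ℂ] A) (E : A →L[ℂ] B) (u v : A) : Prop :=
  ∀ (n : ℕ) (a : Fin (n + 1) → A) (idx : Fin (n + 1) → Bool),
    (∀ j, a j ∈ (if idx j then bimodGen ι u else bimodGen ι v)) →
    (∀ j : Fin n, idx j.castSucc ≠ idx j.succ) →
    ∀ j, idx j = false →
      E (List.ofFn a).prod =
        E (((List.ofFn a).take (j : ℕ)).prod * ι (E (a j)) *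
            ((List.ofFn a).drop ((j : ℕ) + 1)).prod)

namespace MCAux

variable {ι : B →⋆ₐ[ℂ] A} {E : A →L[ℂ] B}

lemma E_iota (h : IsCStarOVProbSpace ι E) (b : B) : E (ι b) = b := by
  have := h.E_bimod b 1 1
  simpa [h.E_one] using this

lemma E_mul_iota (h : IsCStarOVProbSpace ι E) (a : A) (β : B) :
    E (a * ι β) = E a * β := by
  have := h.E_bimod 1 β a
  simpa using this

lemma norm_iota (h : IsCStarOVProbSpace ι E) (b : B) : ‖ι b‖ = ‖b‖ :=
  h.isometry.norm_map_of_map_zero (map_zero ι) b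

lemma norm_one_le : ‖(1 : A)‖ ≤ 1 := by
  have h1 : ‖star (1 : A) * 1‖ = ‖(1 : A)‖ * ‖(1 : A)‖ := CStarRing.norm_star_mul_self
  simp only [star_one, mul_one] at h1
  nlinarith [norm_nonneg (1 : A)]

lemma self_mem_bimodGen (u : A) : u ∈ bimodGen ι u :=
  NonUnitalAlgebra.subset_adjoin ℂ ⟨1, 1, by simp⟩

lemma bimodGen_mul_iota {u a : A} (ha : a ∈ bimodGen ι u) (β : B) :
    a * ι β ∈ bimodGen ι u := by
  induction ha using NonUnitalAlgebra.adjoin_induction with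
  | mem z hz =>
      obtain ⟨b₁, b₂, rfl⟩ := hz
      exact NonUnitalAlgebra.subset_adjoin ℂ ⟨b₁, b₂ * β, by simp [mul_assoc]⟩
  | add z w _ _ hz hw => simpa [add_mul] using add_mem hz hw
  | zero => simpa using zero_mem _
  | mul z w hz hw _ hw' =>
      have : z * w * ι β = z * (w * ι β) := mul_assoc _ _ _
      rw [this]
      exact mul_mem hz hw'
  | smul r z _ hz => simpa [smul_mul_assoc] using SMulMemClass.smul_mem r hz

lemma mul_self_mem_bimodGen {u : A} (b : B) : ι b * u ∈ bimodGen ι u :=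
  NonUnitalAlgebra.subset_adjoin ℂ ⟨b, 1, by simp⟩

lemma isUnit_one_sub {z : A} (hz : ‖z‖ ≤ 1 / 2) : IsUnit (1 - z) :=
  (Units.oneSub z (by nlinarith [norm_nonneg z])).isUnit

lemma inv_one_sub_eq {z : A} (hz : IsUnit (1 - z)) :
    Ring.inverse (1 - z) = 1 + Ring.inverse (1 - z) * z := by
  have h1 : Ring.inverse (1 - z) * (1 - z) = 1 := Ring.inverse_mul_cancel _ hz
  rw [mul_sub, mul_one] at h1
  have := congrArg (fun w => w + Ring.inverse (1 - z) * z) h1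
  simpa [sub_add_cancel] using this

lemma inv_one_sub_mul {z : A} (hz : IsUnit (1 - z)) :
    Ring.inverse (1 - z) * z = Ring.inverse (1 - z) - 1 := by
  nth_rewrite 2 [inv_one_sub_eq hz]
  abel

lemma norm_inv_one_sub {z : A} (hz : ‖z‖ ≤ 1 / 2) :
    ‖Ring.inverse (1 - z)‖ ≤ 2 := by
  have hu := isUnit_one_sub hz
  have h1 := inv_one_sub_eq hu
  have h2 : ‖Ring.inverse (1 - z)‖ ≤ 1 + ‖Ring.inverse (1 - z)‖ * ‖z‖ := by
    calc ‖Ring.inverse (1 - z)‖ = ‖1 + Ring.inverse (1 - z) * z‖ := by rw [← h1]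
    _ ≤ ‖(1 : A)‖ + ‖Ring.inverse (1 - z) * z‖ := norm_add_le _ _
    _ ≤ 1 + ‖Ring.inverse (1 - z)‖ * ‖z‖ := by
        gcongr
        · exact norm_one_le
        · exact norm_mul_le _ _
  nlinarith [norm_nonneg (Ring.inverse (1 - z))]

lemma ring_inverse_eq_of {a g : A} (ha : IsUnit a) (hg : a * g = 1) :
    Ring.inverse a = g := by
  calc Ring.inverse a = Ring.inverse a * (a * g) := by rw [hg, mul_one]
  _ = g := by rw [← mul_assoc, Ring.inverse_mul_cancel _ ha, one_mul]

lemma ring_inverse_mul_eq {a b : A} (ha : IsUnit a) (hb : IsUnit b) :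
    Ring.inverse (a * b) = Ring.inverse b * Ring.inverse a := by
  obtain ⟨ua, rfl⟩ := ha
  obtain ⟨ub, rfl⟩ := hb
  rw [← Units.val_mul, Ring.inverse_unit, Ring.inverse_unit, Ring.inverse_unit,
    ← Units.val_mul, mul_inv_rev]

lemma tendsto_geom0 {z : A} (hz : ‖z‖ < 1) :
    Filter.Tendsto (fun N => ∑ i ∈ Finset.range N, z ^ i) Filter.atTop
      (nhds (Ring.inverse (1 - z))) := by
  have hu : IsUnit (1 - z) := (Units.oneSub z hz).isUnit
  have key : ∀ N, (∑ i ∈ Finset.range N, z ^ i) =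
      Ring.inverse (1 - z) - Ring.inverse (1 - z) * z ^ N := by
    intro N
    have h1 : (1 - z) * (∑ i ∈ Finset.range N, z ^ i) = 1 - z ^ N := by
      have h2 := mul_geom_sum z N
      have h3 : (1 - z) = -(z - 1) := (neg_sub z 1).symm
      rw [h3, neg_mul, h2, neg_sub]
    calc (∑ i ∈ Finset.range N, z ^ i)
        = Ring.inverse (1 - z) * ((1 - z) * (∑ i ∈ Finset.range N, z ^ i)) := by
          rw [← mul_assoc, Ring.inverse_mul_cancel _ hu, one_mul]
      _ = Ring.inverse (1 - z) - Ring.inverse (1 - z) * z ^ N := by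
          rw [h1, mul_sub, mul_one]
  simp only [key]
  have hpow : Filter.Tendsto (fun N => z ^ N) Filter.atTop (nhds 0) :=
    tendsto_pow_atTop_nhds_zero_of_norm_lt_one hz
  have := (tendsto_const_nhds (x := Ring.inverse (1 - z)) (f := Filter.atTop)).sub
    ((tendsto_const_nhds (x := Ring.inverse (1 - z)) (f := Filter.atTop)).mul hpow)
  simpa using this

lemma tendsto_geom1 {z : A} (hz : ‖z‖ < 1) :
    Filter.Tendsto (fun N => ∑ i ∈ Finset.range N, z ^ (i + 1)) Filter.atTop
      (nhds (Ring.inverse (1 - z) * z)) := by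
  have h1 : ∀ N, (∑ i ∈ Finset.range N, z ^ (i + 1)) = (∑ i ∈ Finset.range N, z ^ i) * z := by
    intro N
    rw [Finset.sum_mul]
    exact Finset.sum_congr rfl fun i _ => (pow_succ z i)
  simp only [h1]
  exact (tendsto_geom0 hz).mul tendsto_const_nhds


/-- Apply monotone independence to collapse the entry `c` (sitting at an even position,
with entries at even positions in `bimodGen ι v` and at odd positions in `bimodGen ι u`). -/
lemma indep_collapse {u v : A} (hM : MonotoneIndepPair ι E u v)
    (p : List A) (c : A) (q : List A)
    (hmem : ∀ i (hi : i < (p ++ c :: q).length),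
        (p ++ c :: q)[i] ∈ (if i % 2 = 1 then bimodGen ι u else bimodGen ι v))
    (hp : p.length % 2 = 0) :
    E (p ++ c :: q).prod = E (p.prod * ι (E c) * q.prod) := by
  have hlen : (p ++ c :: q).length = p.length + q.length + 1 := by
    simp [List.length_append]; omega
  obtain ⟨n, hn⟩ : ∃ n, (p ++ c :: q).length = n + 1 := ⟨p.length + q.length, hlen⟩
  set a : Fin (n + 1) → A := fun j => (p ++ c :: q)[(j : ℕ)]'(by rw [hn]; exact j.isLt)
    with ha
  set idx : Fin (n + 1) → Bool := fun j => decide ((j : ℕ) % 2 = 1) with hidx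
  have hofn : List.ofFn a = p ++ c :: q := by
    apply List.ext_getElem
    · simp [hn]
    · intro i h1 h2
      rw [List.getElem_ofFn]
  have hmem' : ∀ j, a j ∈ (if idx j then bimodGen ι u else bimodGen ι v) := by
    intro j
    have hj : (j : ℕ) < (p ++ c :: q).length := by rw [hn]; exact j.isLt
    have := hmem (j : ℕ) hj
    by_cases hpar : (j : ℕ) % 2 = 1
    · simpa [a, idx, hpar] using this
    · simpa [a, idx, hpar] using this
  have halt : ∀ j : Fin n, idx j.castSucc ≠ idx j.succ := by
    intro j
    simp only [idx, Fin.coe_castSucc, Fin.val_succ, ne_eq, decide_eq_decide]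
    omega
  have hjlt : p.length < n + 1 := by omega
  set j : Fin (n + 1) := ⟨p.length, hjlt⟩ with hj
  have hjf : idx j = false := by
    simp only [idx, hj, decide_eq_false_iff_not]
    omega
  have haj : a j = c := by
    have h0 : a j = (p ++ c :: q)[p.length]'(by rw [hn]; exact hjlt) := rfl
    rw [h0, List.getElem_append_right (le_refl p.length)]
    simp
  have := hM n a idx hmem' halt j hjf
  rw [hofn, haj] at this
  rw [this]
  have ht : (p ++ c :: q).take (j : ℕ) = p := List.take_left
  have hd : (p ++ c :: q).drop ((j : ℕ) + 1) = q := by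
    show (p ++ c :: q).drop (p.length + 1) = q
    have := List.drop_append (l₁ := p) (l₂ := c :: q) (i := p.length + 1)
    simpa using this
  rw [ht, hd]

/-- Alternating list `[r, u, r, u, …]` of length `2k`. -/
def altL (r u : A) : ℕ → List A
  | 0 => []
  | k + 1 => r :: u :: altL r u k

lemma altL_length (r u : A) (k : ℕ) : (altL r u k).length = 2 * k := by
  induction k with
  | zero => rfl
  | succ k ih => simp [altL, ih]; omega

lemma altL_prod (r u : A) (k : ℕ) : (altL r u k).prod = (r * u) ^ k := by
  induction k with
  | zero => simp [altL]
  | succ k ih => rw [pow_succ']; simp [altL, ih, mul_assoc]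

lemma altL_getElem (r u : A) (k : ℕ) :
    ∀ i (hi : i < (altL r u k).length), (altL r u k)[i] = if i % 2 = 1 then u else r := by
  induction k with
  | zero => intro i hi; simp [altL] at hi
  | succ k ih =>
      intro i hi
      match i with
      | 0 => rfl
      | 1 => rfl
      | (i + 2) =>
          have hi' : i < (altL r u k).length := by
            simp only [altL, List.length_cons] at hi
            omega
          have h0 : (altL r u (k + 1))[i + 2]'hi = (altL r u k)[i]'hi' := rfl
          rw [h0, ih i hi']
          have hp : (i + 2) % 2 = i % 2 := by omega
          rw [hp]

lemma word_mem {u v r : A} (hr : r ∈ bimodGen ι v) (hu : u ∈ bimodGen ι u) (k : ℕ)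
    (q : List A)
    (hq : ∀ i (hi : i < q.length),
      q[i] ∈ (if i % 2 = 1 then bimodGen ι v else bimodGen ι u)) :
    ∀ i (hi : i < (altL r u k ++ r :: q).length),
      (altL r u k ++ r :: q)[i] ∈ (if i % 2 = 1 then bimodGen ι u else bimodGen ι v) := by
  intro i hi
  have hlen := altL_length r u k
  by_cases hcase : i < (altL r u k).length
  · rw [List.getElem_append_left hcase, altL_getElem r u k i hcase]
    by_cases hpar : i % 2 = 1
    · simpa [hpar] using hu
    · simpa [hpar] using hr
  · push_neg at hcase
    obtain ⟨d, rfl⟩ : ∃ d, i = (altL r u k).length + d := ⟨i - (altL r u k).length, by omega⟩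
    rw [List.getElem_append_right (Nat.le_add_right _ _)]
    simp only [Nat.add_sub_cancel_left]
    match d with
    | 0 =>
        have hpar : ¬ ((altL r u k).length % 2 = 1) := by omega
        simpa [hpar] using hr
    | (e + 1) =>
        have hq' : e < q.length := by
          simp only [List.length_append, List.length_cons] at hi
          omega
        rw [List.getElem_cons_succ]
        by_cases hpar : ((altL r u k).length + (e + 1)) % 2 = 1
        · have he : ¬ (e % 2 = 1) := by omega
          simp only [hpar, if_true]
          simpa [he] using hq e hq'
        · have he : e % 2 = 1 := by omega
          simp only [hpar, if_false]
          simpa [he] using hq e hq'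


lemma stepA {u v : A} (hM : MonotoneIndepPair ι E u v) (k : ℕ) {r a : A}
    (hr : r ∈ bimodGen ι v) (ha : a ∈ bimodGen ι u) :
    E ((r * u) ^ k * (r * a)) = E ((r * u) ^ k * (ι (E r) * a)) := by
  have hu : u ∈ bimodGen ι u := self_mem_bimodGen u
  have hq : ∀ i (hi : i < [a].length),
      [a][i] ∈ (if i % 2 = 1 then bimodGen ι v else bimodGen ι u) := by
    intro i hi
    have h0 : i = 0 := by simpa using hi
    subst h0
    simpa using ha
  have := indep_collapse hM (altL r u k) r [a]
    (word_mem hr hu k [a] hq) (by rw [altL_length]; omega)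
  simp only [List.prod_append, altL_prod, List.prod_cons, List.prod_nil, mul_one,
    mul_assoc] at this
  exact this

lemma stepA' {u v : A} (hM : MonotoneIndepPair ι E u v) (k : ℕ) {r : A}
    (hr : r ∈ bimodGen ι v) :
    E ((r * u) ^ k * r) = E ((r * u) ^ k * ι (E r)) := by
  have hu : u ∈ bimodGen ι u := self_mem_bimodGen u
  have hq : ∀ i (hi : i < ([] : List A).length),
      ([] : List A)[i] ∈ (if i % 2 = 1 then bimodGen ι v else bimodGen ι u) := by
    intro i hi; simp at hi
  have := indep_collapse hM (altL r u k) r []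
    (word_mem hr hu k [] hq) (by rw [altL_length]; omega)
  simp only [List.prod_append, altL_prod, List.prod_cons, List.prod_nil, mul_one,
    mul_assoc] at this
  exact this

lemma collapseA {u v : A} (hM : MonotoneIndepPair ι E u v) (h : IsCStarOVProbSpace ι E)
    (k : ℕ) : ∀ {r a : A}, r ∈ bimodGen ι v → a ∈ bimodGen ι u →
    E ((r * u) ^ k * (r * a)) = E ((ι (E r) * u) ^ k * (ι (E r) * a)) := by
  induction k with
  | zero =>
      intro r a hr ha
      simpa using stepA hM 0 hr ha
  | succ k ih =>
      intro r a hr ha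
      rw [stepA hM (k + 1) hr ha]
      have e1 : (r * u) ^ (k + 1) * (ι (E r) * a) = (r * u) ^ k * (r * (u * ι (E r) * a)) := by
        simp only [pow_succ, mul_assoc]
      have ha' : u * ι (E r) * a ∈ bimodGen ι u :=
        mul_mem (bimodGen_mul_iota (self_mem_bimodGen u) _) ha
      rw [e1, ih hr ha']
      simp only [pow_succ, mul_assoc]

lemma collapseA' {u v : A} (hM : MonotoneIndepPair ι E u v) (h : IsCStarOVProbSpace ι E)
    (k : ℕ) {r : A} (hr : r ∈ bimodGen ι v) :
    E ((r * u) ^ k * r) = E ((ι (E r) * u) ^ k * ι (E r)) := by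
  cases k with
  | zero => simpa using (E_iota h (E r)).symm
  | succ k =>
      rw [stepA' hM (k + 1) hr]
      have e1 : (r * u) ^ (k + 1) * ι (E r) = (r * u) ^ k * (r * (u * ι (E r))) := by
        simp only [pow_succ, mul_assoc]
      have ha' : u * ι (E r) ∈ bimodGen ι u :=
        bimodGen_mul_iota (self_mem_bimodGen u) _
      rw [e1, collapseA hM h k hr ha']
      simp only [pow_succ, mul_assoc]

lemma collapseA'' {u v : A} (hM : MonotoneIndepPair ι E u v) (h : IsCStarOVProbSpace ι E)
    (k : ℕ) {r : A} (hr : r ∈ bimodGen ι v) :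
    E ((r * u) ^ k) = E ((ι (E r) * u) ^ k) := by
  cases k with
  | zero => simp
  | succ k =>
      have e1 : (r * u) ^ (k + 1) = (r * u) ^ k * (r * u) := pow_succ _ _
      have e2 : (ι (E r) * u) ^ (k + 1) = (ι (E r) * u) ^ k * (ι (E r) * u) := pow_succ _ _
      rw [e1, e2, collapseA hM h k hr (self_mem_bimodGen u)]


lemma collapse_lim {u v : A} (hM : MonotoneIndepPair ι E u v) (h : IsCStarOVProbSpace ι E)
    {r : A} {rN : ℕ → A} (hmem : ∀ N, rN N ∈ bimodGen ι v)
    (hlim : Filter.Tendsto rN Filter.atTop (nhds r)) (k : ℕ) :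
    E ((r * u) ^ k) = E ((ι (E r) * u) ^ k) ∧
    E ((r * u) ^ k * r) = E ((ι (E r) * u) ^ k * ι (E r)) := by
  have hι : Continuous ι := h.isometry.continuous
  have hf1 : Continuous fun z : A => E ((z * u) ^ k) :=
    E.continuous.comp ((continuous_id.mul continuous_const).pow k)
  have hf2 : Continuous fun z : A => E ((ι (E z) * u) ^ k) :=
    E.continuous.comp (((hι.comp E.continuous).mul continuous_const).pow k)
  have hg1 : Continuous fun z : A => E ((z * u) ^ k * z) :=
    E.continuous.comp (((continuous_id.mul continuous_const).pow k).mul continuous_id)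
  have hg2 : Continuous fun z : A => E ((ι (E z) * u) ^ k * ι (E z)) :=
    E.continuous.comp ((((hι.comp E.continuous).mul continuous_const).pow k).mul
      (hι.comp E.continuous))
  constructor
  · refine tendsto_nhds_unique (((hf1.tendsto r).comp hlim).congr fun N => rfl) ?_
    exact (((hf2.tendsto r).comp hlim).congr fun N => (collapseA'' hM h k (hmem N)).symm)
  · refine tendsto_nhds_unique (((hg1.tendsto r).comp hlim).congr fun N => rfl) ?_
    exact (((hg2.tendsto r).comp hlim).congr fun N => (collapseA' hM h k (hmem N)).symm)

/-- The key composition identity `θ_{yx}(b) = θ_x(κ_y(b))` for a monotone independent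
pair `(x - 1, y)`. -/
lemma key_identity (h : IsCStarOVProbSpace ι E) {x y : A}
    (hM : MonotoneIndepPair ι E (x - 1) y) {b : B}
    (hby : ‖ι b * y‖ ≤ 1 / 2)
    (hru : ‖Ring.inverse (1 - ι b * y) * (ι b * y) * (x - 1)‖ ≤ 1 / 2)
    (hS : ‖thetaT ι E y b‖ ≤ 1 / 2)
    (hqu : ‖ι (thetaT ι E y b) * (x - 1)‖ ≤ 1 / 2)
    (hbyx : ‖ι b * (y * x)‖ ≤ 1 / 2)
    (hwx : ‖ι (kappaT ι E y b) * x‖ ≤ 1 / 2) :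
    thetaT ι E (y * x) b = thetaT ι E x (kappaT ι E y b) := by
  set u : A := x - 1 with hu
  set r : A := Ring.inverse (1 - ι b * y) * (ι b * y) with hr
  set S : B := thetaT ι E y b with hSdef
  set q : A := ι S with hq
  set H : B := 1 + S with hH
  set w : B := kappaT ι E y b with hw
  have hwH : w = Ring.inverse H * S := rfl
  have νby : IsUnit (1 - ι b * y) := isUnit_one_sub hby
  have νru : IsUnit (1 - r * u) := isUnit_one_sub hru
  have νqu : IsUnit (1 - q * u) := isUnit_one_sub hqu
  have νbyx : IsUnit (1 - ι b * (y * x)) := isUnit_one_sub hbyx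
  have νwx : IsUnit (1 - ι w * x) := isUnit_one_sub hwx
  have νH : IsUnit H := by
    have e : H = 1 - (-S) := by rw [hH, sub_neg_eq_add]
    rw [e]
    exact isUnit_one_sub (by simpa using hS)
  have hx1 : x = 1 + u := by rw [hu]; abel
  -- first factorization
  have fact1 : 1 - ι b * (y * x) = (1 - ι b * y) * (1 - r * u) := by
    have h1 : (1 - ι b * y) * r = ι b * y := by
      rw [hr, ← mul_assoc, Ring.mul_inverse_cancel _ νby, one_mul]
    have h2 : (1 - ι b * y) * (1 - r * u) = (1 - ι b * y) - ι b * y * u := by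
      rw [mul_sub, mul_one, ← mul_assoc, h1]
    rw [h2, hx1]
    noncomm_ring
  have hinv1r : Ring.inverse (1 - ι b * y) = 1 + r := by
    rw [hr]
    exact inv_one_sub_eq νby
  have inv1 : Ring.inverse (1 - ι b * (y * x)) = Ring.inverse (1 - r * u) * (1 + r) := by
    rw [fact1, ring_inverse_mul_eq νby νru, hinv1r]
  have th1' : thetaT ι E (y * x) b = E (Ring.inverse (1 - r * u) * (1 + r)) - 1 := by
    rw [show thetaT ι E (y * x) b
        = E (Ring.inverse (1 - ι b * (y * x)) * (ι b * (y * x))) from rfl,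
      inv_one_sub_mul νbyx, map_sub, h.E_one, inv1]
  -- geometric approximation of r
  set rN : ℕ → A := fun N => ∑ i ∈ Finset.range N, (ι b * y) ^ (i + 1) with hrN
  have hpowmem : ∀ i : ℕ, (ι b * y) ^ (i + 1) ∈ bimodGen ι y := by
    intro i
    induction i with
    | zero => simpa using mul_self_mem_bimodGen (u := y) b
    | succ i ih =>
        rw [pow_succ]
        exact mul_mem ih (mul_self_mem_bimodGen (u := y) b)
  have hrNmem : ∀ N, rN N ∈ bimodGen ι y := by
    intro N
    exact sum_mem fun i _ => hpowmem i
  have hrlim : Filter.Tendsto rN Filter.atTop (nhds r) := by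
    rw [hr]
    exact tendsto_geom1 (lt_of_le_of_lt hby (by norm_num))
  have hqe : ι (E r) = q := rfl
  have hcol : ∀ k : ℕ, E ((r * u) ^ k * (1 + r)) = E ((q * u) ^ k * (1 + q)) := by
    intro k
    obtain ⟨c1, c2⟩ := collapse_lim hM h hrNmem hrlim k
    rw [hqe] at c1 c2
    have e1 : (r * u) ^ k * (1 + r) = (r * u) ^ k + (r * u) ^ k * r := by
      rw [mul_add, mul_one]
    have e2 : (q * u) ^ k * (1 + q) = (q * u) ^ k + (q * u) ^ k * q := by
      rw [mul_add, mul_one]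
    rw [e1, e2, map_add, map_add, c1, c2]
  -- summation
  have t1 : Filter.Tendsto (fun N => E ((∑ k ∈ Finset.range N, (r * u) ^ k) * (1 + r)))
      Filter.atTop (nhds (E (Ring.inverse (1 - r * u) * (1 + r)))) :=
    ((E.continuous.tendsto _).comp
      ((tendsto_geom0 (lt_of_le_of_lt hru (by norm_num))).mul tendsto_const_nhds)).congr
      fun N => rfl
  have t2 : Filter.Tendsto (fun N => E ((∑ k ∈ Finset.range N, (q * u) ^ k) * (1 + q)))
      Filter.atTop (nhds (E (Ring.inverse (1 - q * u) * (1 + q)))) :=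
    ((E.continuous.tendsto _).comp
      ((tendsto_geom0 (lt_of_le_of_lt hqu (by norm_num))).mul tendsto_const_nhds)).congr
      fun N => rfl
  have hsum : ∀ N, E ((∑ k ∈ Finset.range N, (r * u) ^ k) * (1 + r))
      = E ((∑ k ∈ Finset.range N, (q * u) ^ k) * (1 + q)) := by
    intro N
    rw [Finset.sum_mul, Finset.sum_mul, map_sum, map_sum]
    exact Finset.sum_congr rfl fun k _ => hcol k
  have main1 : E (Ring.inverse (1 - r * u) * (1 + r))
      = E (Ring.inverse (1 - q * u) * (1 + q)) :=
    tendsto_nhds_unique (t1.congr hsum) t2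
  -- second factorization
  have hw1 : Ring.inverse H = 1 - w := by
    have hHw : Ring.inverse H * H = 1 := Ring.inverse_mul_cancel _ νH
    have e : Ring.inverse H * H = Ring.inverse H + w := by
      rw [hH, mul_add, mul_one, hwH]
    rw [e] at hHw
    exact eq_sub_of_add_eq hHw
  have fact2 : 1 - ι w * x = ι (Ring.inverse H) * (1 - q * u) := by
    have e1 : ι (Ring.inverse H) * q = ι w := by
      rw [hq, ← map_mul]
      exact congrArg ι hwH.symm
    rw [mul_sub, mul_one, ← mul_assoc, e1, hw1, map_sub, map_one, hx1]
    noncomm_ring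
  have inv2 : Ring.inverse (1 - ι w * x) = Ring.inverse (1 - q * u) * ι H := by
    apply ring_inverse_eq_of νwx
    rw [fact2]
    calc ι (Ring.inverse H) * (1 - q * u) * (Ring.inverse (1 - q * u) * ι H)
        = ι (Ring.inverse H) * ((1 - q * u) * Ring.inverse (1 - q * u)) * ι H := by
          simp only [mul_assoc]
      _ = ι (Ring.inverse H) * ι H := by rw [Ring.mul_inverse_cancel _ νqu, mul_one]
      _ = 1 := by rw [← map_mul, Ring.inverse_mul_cancel _ νH, map_one]
  have th2' : thetaT ι E x w = E (Ring.inverse (1 - q * u) * ι H) - 1 := by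
    rw [show thetaT ι E x w = E (Ring.inverse (1 - ι w * x) * (ι w * x)) from rfl,
      inv_one_sub_mul νwx, map_sub, h.E_one, inv2]
  have hιH : ι H = 1 + q := by rw [hH, map_add, map_one, hq]
  rw [th1', th2', hιH, main1]


lemma theta_norm_le (h : IsCStarOVProbSpace ι E) {z : A} {β : B} (hz : ‖ι β * z‖ ≤ 1 / 2) :
    ‖thetaT ι E z β‖ ≤ 2 * ‖E‖ * ‖ι β * z‖ := by
  calc ‖thetaT ι E z β‖ = ‖E (Ring.inverse (1 - ι β * z) * (ι β * z))‖ := rfl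
  _ ≤ ‖E‖ * ‖Ring.inverse (1 - ι β * z) * (ι β * z)‖ := E.le_opNorm _
  _ ≤ ‖E‖ * (‖Ring.inverse (1 - ι β * z)‖ * ‖ι β * z‖) := by
      gcongr
      exact norm_mul_le _ _
  _ ≤ ‖E‖ * (2 * ‖ι β * z‖) := by
      gcongr
      exact norm_inv_one_sub hz
  _ = 2 * ‖E‖ * ‖ι β * z‖ := by ring

lemma kappa_norm_le (h : IsCStarOVProbSpace ι E) {z : A} {β : B}
    (hθ : ‖thetaT ι E z β‖ ≤ 1 / 2) :
    IsUnit (1 + thetaT ι E z β) ∧ ‖kappaT ι E z β‖ ≤ 2 * ‖thetaT ι E z β‖ := by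
  have e : (1 : B) + thetaT ι E z β = 1 - -thetaT ι E z β := by rw [sub_neg_eq_add]
  have hn : ‖-thetaT ι E z β‖ ≤ 1 / 2 := by simpa using hθ
  have hu : IsUnit (1 + thetaT ι E z β) := by rw [e]; exact isUnit_one_sub hn
  refine ⟨hu, ?_⟩
  calc ‖kappaT ι E z β‖
      ≤ ‖Ring.inverse (1 + thetaT ι E z β)‖ * ‖thetaT ι E z β‖ := norm_mul_le _ _
  _ ≤ 2 * ‖thetaT ι E z β‖ := by
      gcongr
      rw [e]
      exact norm_inv_one_sub hn

lemma kappa_diff_pair (h : IsCStarOVProbSpace ι E) {z : A} {β : B}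
    (h1 : IsUnit (1 - ι β * z)) (h2 : IsUnit (1 + thetaT ι E z β)) :
    DifferentiableAt ℂ (fun p : A × B => kappaT ι E p.1 p.2) (z, β) := by
  let ιL : B →L[ℂ] A := { toLinearMap := ι.toAlgHom.toLinearMap, cont := h.isometry.continuous }
  have hsnd : DifferentiableAt ℂ (fun p : A × B => ι p.2) (z, β) := by
    have := DifferentiableAt.comp (𝕜 := ℂ) (z, β) ιL.differentiableAt differentiableAt_snd
    exact this
  have hm : DifferentiableAt ℂ (fun p : A × B => ι p.2 * p.1) (z, β) :=
    hsnd.mul differentiableAt_fst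
  have hinv : DifferentiableAt ℂ (fun p : A × B => Ring.inverse (1 - ι p.2 * p.1)) (z, β) :=
    DifferentiableAt.inverse ((differentiableAt_const _).sub hm) h1
  have hθ : DifferentiableAt ℂ (fun p : A × B => thetaT ι E p.1 p.2) (z, β) := by
    show DifferentiableAt ℂ
      (fun p : A × B => E (Ring.inverse (1 - ι p.2 * p.1) * (ι p.2 * p.1))) (z, β)
    exact E.differentiableAt.comp _ (hinv.mul hm)
  show DifferentiableAt ℂ
    (fun p : A × B => Ring.inverse (1 + thetaT ι E p.1 p.2) * thetaT ι E p.1 p.2) (z, β)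
  exact (DifferentiableAt.inverse ((differentiableAt_const _).add hθ) h2).mul hθ

end MCAux

set_option maxHeartbeats 1600000 in
/-- For norm-differentiable, uniformly bounded, selfadjoint paths `t ↦ x_t`, `t ↦ y_t` in a
C*-operator-valued probability space `(A, B, E)` such that `(x_t − 1, y_t)` is monotone
independent over `B` for all `t`, there is `δ > 0` such that for all `‖b‖ < δ` and all `t` the
κ-transforms are defined, the relevant functions of `t` are differentiable, and
`(d/dt) κ_{y_t x_t}(b) = (Dκ_{x_t})(κ_{y_t}(b))((d/dt) κ_{y_t}(b)) + (∂/∂t κ_{x_t}(w))|_{w = κ_{y_t}(b)}`. -/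
theorem monotone_convolution_differentiable_paths_kappa
    (ι : B →⋆ₐ[ℂ] A) (E : A →L[ℂ] B) (h : IsCStarOVProbSpace ι E)
    (M : ℝ) (hM : 0 < M) (x y : ℝ → A)
    (hxdiff : Differentiable ℝ x) (hydiff : Differentiable ℝ y)
    (hxsa : ∀ t, star (x t) = x t) (hysa : ∀ t, star (y t) = y t)
    (hxM : ∀ t, ‖x t‖ ≤ M) (hyM : ∀ t, ‖y t‖ ≤ M)
    (hindep : ∀ t, MonotoneIndepPair ι E (x t - 1) (y t)) :
    ∃ δ > (0 : ℝ), ∀ b : B, ‖b‖ < δ → ∀ t : ℝ,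
      IsUnit (1 + thetaT ι E (y t) b) ∧
      IsUnit (1 + thetaT ι E (x t) (kappaT ι E (y t) b)) ∧
      IsUnit (1 + thetaT ι E (y t * x t) b) ∧
      DifferentiableAt ℝ (fun s => kappaT ι E (y s) b) t ∧
      DifferentiableAt ℝ (fun s => kappaT ι E (x s) (kappaT ι E (y t) b)) t ∧
      DifferentiableAt ℝ (fun s => kappaT ι E (y s * x s) b) t ∧
      DifferentiableAt ℂ (kappaT ι E (x t)) (kappaT ι E (y t) b) ∧
      deriv (fun s => kappaT ι E (y s * x s) b) t =
        fderiv ℂ (kappaT ι E (x t)) (kappaT ι E (y t) b)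
            (deriv (fun s => kappaT ι E (y s) b) t) +
          deriv (fun s => kappaT ι E (x s) (kappaT ι E (y t) b)) t := by
  have hK0 : (0 : ℝ) ≤ ‖E‖ := norm_nonneg _
  have hM1 : (1 : ℝ) ≤ M + 1 := by linarith
  have hK1 : (1 : ℝ) ≤ ‖E‖ + 1 := by linarith
  set δ : ℝ := (64 * (‖E‖ + 1) ^ 2 * (M + 1) ^ 3)⁻¹ with hδ
  have hδpos : 0 < δ := by rw [hδ]; positivity
  refine ⟨δ, hδpos, ?_⟩
  intro b hb t
  have hhalf : ∀ c : ℝ, 0 ≤ c → c ≤ 32 * (‖E‖ + 1) ^ 2 * (M + 1) ^ 3 → c * δ ≤ 1 / 2 := by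
    intro c hc0 hc
    have h1 : c * δ ≤ 32 * (‖E‖ + 1) ^ 2 * (M + 1) ^ 3 * δ :=
      mul_le_mul_of_nonneg_right hc hδpos.le
    have h2 : 32 * (‖E‖ + 1) ^ 2 * (M + 1) ^ 3 * δ = 1 / 2 := by
      rw [hδ]
      have hne1 : (‖E‖ + 1) ^ 2 ≠ 0 := by positivity
      have hne2 : (M + 1) ^ 3 ≠ 0 := by positivity
      field_simp
      ring
    linarith
  have hbound : ∀ c₁ c₂ : ℝ, 0 ≤ c₂ → c₁ ≤ 32 * (‖E‖ + 1) ^ 2 → c₂ ≤ (M + 1) ^ 3 →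
      c₁ * c₂ ≤ 32 * (‖E‖ + 1) ^ 2 * (M + 1) ^ 3 := by
    intro c₁ c₂ h0 h1 h2
    calc c₁ * c₂ ≤ 32 * (‖E‖ + 1) ^ 2 * c₂ := mul_le_mul_of_nonneg_right h1 h0
    _ ≤ 32 * (‖E‖ + 1) ^ 2 * (M + 1) ^ 3 :=
        mul_le_mul_of_nonneg_left h2 (by positivity)
  have haux2 : M + 1 ≤ (M + 1) ^ 3 := le_self_pow₀ hM1 (by norm_num)
  have haux3 : (M + 1) ^ 2 ≤ (M + 1) ^ 3 := pow_le_pow_right₀ hM1 (by norm_num)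
  have hP2 : (0 : ℝ) ≤ (M + 1) ^ 2 := by positivity
  have hyM1 : ∀ s, ‖y s‖ ≤ M + 1 := fun s => le_trans (hyM s) (by linarith)
  have hxM1 : ∀ s, ‖x s‖ ≤ M + 1 := fun s => le_trans (hxM s) (by linarith)
  have hxu : ∀ s, ‖x s - 1‖ ≤ M + 1 := fun s => by
    calc ‖x s - 1‖ ≤ ‖x s‖ + ‖(1 : A)‖ := norm_sub_le _ _
    _ ≤ M + 1 := add_le_add (hxM s) MCAux.norm_one_le
  have hbn : ‖b‖ ≤ δ := hb.le
  have hby : ∀ s, ‖ι b * y s‖ ≤ (M + 1) * δ := fun s => by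
    calc ‖ι b * y s‖ ≤ ‖ι b‖ * ‖y s‖ := norm_mul_le _ _
    _ = ‖b‖ * ‖y s‖ := by rw [MCAux.norm_iota h]
    _ ≤ δ * (M + 1) := mul_le_mul hbn (hyM1 s) (norm_nonneg _) hδpos.le
    _ = (M + 1) * δ := by ring
  have hbyhalf : ∀ s, ‖ι b * y s‖ ≤ 1 / 2 := fun s => by
    refine le_trans (hby s) (hhalf (M + 1) (by positivity) ?_)
    linarith [hbound 1 (M + 1) (by positivity) (by nlinarith [hK0, sq_nonneg ‖E‖]) haux2]
  have hu1 : ∀ s, IsUnit (1 - ι b * y s) := fun s => MCAux.isUnit_one_sub (hbyhalf s)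
  have hθy : ∀ s, ‖thetaT ι E (y s) b‖ ≤ 2 * ‖E‖ * (M + 1) * δ := fun s => by
    calc ‖thetaT ι E (y s) b‖ ≤ 2 * ‖E‖ * ‖ι b * y s‖ := MCAux.theta_norm_le h (hbyhalf s)
    _ ≤ 2 * ‖E‖ * ((M + 1) * δ) := by gcongr; exact hby s
    _ = 2 * ‖E‖ * (M + 1) * δ := by ring
  have hθyhalf : ∀ s, ‖thetaT ι E (y s) b‖ ≤ 1 / 2 := fun s => by
    refine le_trans (hθy s) (hhalf (2 * ‖E‖ * (M + 1)) (by positivity) ?_)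
    linarith [hbound (2 * ‖E‖) (M + 1) (by positivity) (by nlinarith [hK0, sq_nonneg ‖E‖]) haux2]
  have g1 : ∀ s, IsUnit (1 + thetaT ι E (y s) b) := fun s => (MCAux.kappa_norm_le h (hθyhalf s)).1
  have hw : ∀ s, ‖kappaT ι E (y s) b‖ ≤ 4 * ‖E‖ * (M + 1) * δ := fun s => by
    have h1 := (MCAux.kappa_norm_le h (hθyhalf s)).2
    have h2 := hθy s
    linarith
  have hwx1 : ∀ s (w' : B), ‖w'‖ ≤ 4 * ‖E‖ * (M + 1) * δ →
      ‖ι w' * x s‖ ≤ 1 / 2 ∧ IsUnit (1 - ι w' * x s) ∧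
      ‖thetaT ι E (x s) w'‖ ≤ 1 / 2 ∧ IsUnit (1 + thetaT ι E (x s) w') := by
    intro s w' hw'
    have h1 : ‖ι w' * x s‖ ≤ 4 * ‖E‖ * (M + 1) ^ 2 * δ := by
      calc ‖ι w' * x s‖ ≤ ‖ι w'‖ * ‖x s‖ := norm_mul_le _ _
      _ = ‖w'‖ * ‖x s‖ := by rw [MCAux.norm_iota h]
      _ ≤ 4 * ‖E‖ * (M + 1) * δ * (M + 1) :=
          mul_le_mul hw' (hxM1 s) (norm_nonneg _) (by positivity)
      _ = 4 * ‖E‖ * (M + 1) ^ 2 * δ := by ring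
    have h2 : ‖ι w' * x s‖ ≤ 1 / 2 := by
      refine le_trans h1 (hhalf (4 * ‖E‖ * (M + 1) ^ 2) (by positivity) ?_)
      linarith [hbound (4 * ‖E‖) ((M + 1) ^ 2) hP2 (by nlinarith [hK0, sq_nonneg ‖E‖]) haux3]
    have h3 : ‖thetaT ι E (x s) w'‖ ≤ 1 / 2 := by
      calc ‖thetaT ι E (x s) w'‖ ≤ 2 * ‖E‖ * ‖ι w' * x s‖ := MCAux.theta_norm_le h h2
      _ ≤ 2 * ‖E‖ * (4 * ‖E‖ * (M + 1) ^ 2 * δ) := by gcongr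
      _ = 8 * ‖E‖ * ‖E‖ * (M + 1) ^ 2 * δ := by ring
      _ ≤ 1 / 2 := by
          refine hhalf (8 * ‖E‖ * ‖E‖ * (M + 1) ^ 2) (by positivity) ?_
          linarith [hbound (8 * ‖E‖ * ‖E‖) ((M + 1) ^ 2) hP2
            (by nlinarith [hK0, sq_nonneg ‖E‖]) haux3]
    exact ⟨h2, MCAux.isUnit_one_sub h2, h3, (MCAux.kappa_norm_le h h3).1⟩
  have hbyx : ∀ s, ‖ι b * (y s * x s)‖ ≤ 1 / 2 ∧ IsUnit (1 - ι b * (y s * x s)) ∧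
      IsUnit (1 + thetaT ι E (y s * x s) b) := by
    intro s
    have h1 : ‖ι b * (y s * x s)‖ ≤ (M + 1) ^ 2 * δ := by
      calc ‖ι b * (y s * x s)‖ ≤ ‖ι b‖ * ‖y s * x s‖ := norm_mul_le _ _
      _ = ‖b‖ * ‖y s * x s‖ := by rw [MCAux.norm_iota h]
      _ ≤ δ * ((M + 1) * (M + 1)) := by
          refine mul_le_mul hbn (le_trans (norm_mul_le _ _) ?_) (norm_nonneg _) hδpos.le
          exact mul_le_mul (hyM1 s) (hxM1 s) (norm_nonneg _) (by positivity)
      _ = (M + 1) ^ 2 * δ := by ring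
    have h2 : ‖ι b * (y s * x s)‖ ≤ 1 / 2 := by
      refine le_trans h1 (hhalf ((M + 1) ^ 2) (by positivity) ?_)
      linarith [hbound 1 ((M + 1) ^ 2) hP2 (by nlinarith [hK0, sq_nonneg ‖E‖]) haux3]
    have h3 : ‖thetaT ι E (y s * x s) b‖ ≤ 1 / 2 := by
      calc ‖thetaT ι E (y s * x s) b‖ ≤ 2 * ‖E‖ * ‖ι b * (y s * x s)‖ :=
          MCAux.theta_norm_le h h2
      _ ≤ 2 * ‖E‖ * ((M + 1) ^ 2 * δ) := by gcongr
      _ = 2 * ‖E‖ * (M + 1) ^ 2 * δ := by ring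
      _ ≤ 1 / 2 := by
          refine hhalf (2 * ‖E‖ * (M + 1) ^ 2) (by positivity) ?_
          linarith [hbound (2 * ‖E‖) ((M + 1) ^ 2) hP2 (by nlinarith [hK0, sq_nonneg ‖E‖]) haux3]
    exact ⟨h2, MCAux.isUnit_one_sub h2, (MCAux.kappa_norm_le h h3).1⟩
  have hru : ∀ s, ‖Ring.inverse (1 - ι b * y s) * (ι b * y s) * (x s - 1)‖ ≤ 1 / 2 := fun s => by
    calc ‖Ring.inverse (1 - ι b * y s) * (ι b * y s) * (x s - 1)‖
        ≤ ‖Ring.inverse (1 - ι b * y s) * (ι b * y s)‖ * ‖x s - 1‖ := norm_mul_le _ _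
    _ ≤ ‖Ring.inverse (1 - ι b * y s)‖ * ‖ι b * y s‖ * (M + 1) :=
        mul_le_mul (norm_mul_le _ _) (hxu s) (norm_nonneg _) (by positivity)
    _ ≤ 2 * ((M + 1) * δ) * (M + 1) := by
        have e1 := MCAux.norm_inv_one_sub (hbyhalf s)
        have e2 := hby s
        gcongr
    _ = 2 * (M + 1) ^ 2 * δ := by ring
    _ ≤ 1 / 2 := by
        refine hhalf (2 * (M + 1) ^ 2) (by positivity) ?_
        linarith [hbound 2 ((M + 1) ^ 2) hP2 (by nlinarith [hK0, sq_nonneg ‖E‖]) haux3]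
  have hqu : ∀ s, ‖ι (thetaT ι E (y s) b) * (x s - 1)‖ ≤ 1 / 2 := fun s => by
    calc ‖ι (thetaT ι E (y s) b) * (x s - 1)‖
        ≤ ‖ι (thetaT ι E (y s) b)‖ * ‖x s - 1‖ := norm_mul_le _ _
    _ = ‖thetaT ι E (y s) b‖ * ‖x s - 1‖ := by rw [MCAux.norm_iota h]
    _ ≤ 2 * ‖E‖ * (M + 1) * δ * (M + 1) :=
        mul_le_mul (hθy s) (hxu s) (norm_nonneg _) (by positivity)
    _ = 2 * ‖E‖ * (M + 1) ^ 2 * δ := by ring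
    _ ≤ 1 / 2 := by
        refine hhalf (2 * ‖E‖ * (M + 1) ^ 2) (by positivity) ?_
        linarith [hbound (2 * ‖E‖) ((M + 1) ^ 2) hP2 (by nlinarith [hK0, sq_nonneg ‖E‖]) haux3]
  have hwxk : ∀ s s', ‖ι (kappaT ι E (y s') b) * x s‖ ≤ 1 / 2 := fun s s' =>
    (hwx1 s _ (hw s')).1
  have hcompθ : ∀ s, thetaT ι E (y s * x s) b = thetaT ι E (x s) (kappaT ι E (y s) b) :=
    fun s => MCAux.key_identity h (hindep s) (hbyhalf s) (hru s) (hθyhalf s) (hqu s)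
      ((hbyx s).1) (hwxk s s)
  have hcompκ : ∀ s, kappaT ι E (y s * x s) b = kappaT ι E (x s) (kappaT ι E (y s) b) := by
    intro s
    simp only [kappaT, hcompθ s]
  -- differentiability
  have hdq : ∀ s (w' : B), ‖w'‖ ≤ 4 * ‖E‖ * (M + 1) * δ →
      DifferentiableAt ℂ (fun p : A × B => kappaT ι E p.1 p.2) (x s, w') := by
    intro s w' hw'
    obtain ⟨-, u1, -, u2⟩ := hwx1 s w' hw'
    exact MCAux.kappa_diff_pair h u1 u2
  have hcdiff : ∀ s, DifferentiableAt ℝ (fun s' => kappaT ι E (y s') b) s := by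
    intro s
    have hp := MCAux.kappa_diff_pair h (hu1 s) (g1 s)
    have h2 := (hp.restrictScalars ℝ).comp s ((hydiff s).prodMk (differentiableAt_const b))
    simpa [Function.comp_def] using h2
  have hgdiff : ∀ s, DifferentiableAt ℝ (fun s' => kappaT ι E (y s' * x s') b) s := by
    intro s
    have hp := MCAux.kappa_diff_pair h (hbyx s).2.1 (hbyx s).2.2
    have h2 := (hp.restrictScalars ℝ).comp s
      (((hydiff s).mul (hxdiff s)).prodMk (differentiableAt_const b))
    simpa [Function.comp_def] using h2
  have hpdiff : ∀ s, DifferentiableAt ℝ (fun s' => kappaT ι E (x s') (kappaT ι E (y t) b)) s := by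
    intro s
    have h2 := ((hdq s _ (hw t)).restrictScalars ℝ).comp s
      ((hxdiff s).prodMk (differentiableAt_const (kappaT ι E (y t) b)))
    simpa [Function.comp_def] using h2
  have hκx : DifferentiableAt ℂ (kappaT ι E (x t)) (kappaT ι E (y t) b) := by
    have h2 := (hdq t _ (hw t)).comp (kappaT ι E (y t) b)
      ((differentiableAt_const (x t)).prodMk differentiableAt_id)
    simpa [Function.comp_def] using h2
  have hGdiff : DifferentiableAt ℝ (fun p : ℝ × B => kappaT ι E (x p.1) p.2)
      (t, kappaT ι E (y t) b) := by
    have hin : DifferentiableAt ℝ (fun p : ℝ × B => (x p.1, p.2)) (t, kappaT ι E (y t) b) :=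
      ((hxdiff t).comp _ differentiableAt_fst).prodMk differentiableAt_snd
    have h2 := ((hdq t _ (hw t)).restrictScalars ℝ).comp (t, kappaT ι E (y t) b) hin
    simpa [Function.comp_def] using h2
  set DG := fderiv ℝ (fun p : ℝ × B => kappaT ι E (x p.1) p.2) (t, kappaT ι E (y t) b) with hDG
  have hGf : HasFDerivAt (fun p : ℝ × B => kappaT ι E (x p.1) p.2) DG
      (t, kappaT ι E (y t) b) := hGdiff.hasFDerivAt
  have hc : HasDerivAt (fun s => kappaT ι E (y s) b)
      (deriv (fun s => kappaT ι E (y s) b) t) t := (hcdiff t).hasDerivAt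
  have hchain : HasDerivAt (fun s => kappaT ι E (x s) (kappaT ι E (y s) b))
      (DG (1, deriv (fun s => kappaT ι E (y s) b) t)) t := by
    have hpair : HasDerivAt (fun s => (s, kappaT ι E (y s) b))
        ((1 : ℝ), deriv (fun s => kappaT ι E (y s) b) t) t := (hasDerivAt_id t).prodMk hc
    have h2 := hGf.comp_hasDerivAt t hpair
    simpa [Function.comp_def] using h2
  have hpart_s : HasDerivAt (fun s => kappaT ι E (x s) (kappaT ι E (y t) b))
      (DG (1, 0)) t := by
    have hpair : HasDerivAt (fun s : ℝ => (s, kappaT ι E (y t) b)) ((1 : ℝ), (0 : B)) t :=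
      (hasDerivAt_id t).prodMk (hasDerivAt_const t _)
    have h2 := hGf.comp_hasDerivAt t hpair
    simpa [Function.comp_def] using h2
  have hpart_w : HasFDerivAt (kappaT ι E (x t))
      ((fderiv ℂ (kappaT ι E (x t)) (kappaT ι E (y t) b)).restrictScalars ℝ)
      (kappaT ι E (y t) b) := hκx.hasFDerivAt.restrictScalars ℝ
  have hcompw : HasFDerivAt (kappaT ι E (x t))
      (DG.comp ((0 : B →L[ℝ] ℝ).prod (ContinuousLinearMap.id ℝ B)))
      (kappaT ι E (y t) b) := by
    have hpair : HasFDerivAt (fun w : B => ((t : ℝ), w))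
        ((0 : B →L[ℝ] ℝ).prod (ContinuousLinearMap.id ℝ B)) (kappaT ι E (y t) b) :=
      (hasFDerivAt_const t _).prodMk (hasFDerivAt_id _)
    have h2 := hGf.comp (kappaT ι E (y t) b) hpair
    simpa [Function.comp_def] using h2
  have hDGw : DG ((0 : ℝ), deriv (fun s => kappaT ι E (y s) b) t) =
      (fderiv ℂ (kappaT ι E (x t)) (kappaT ι E (y t) b))
        (deriv (fun s => kappaT ι E (y s) b) t) := by
    have e := hcompw.unique hpart_w
    have e2 := congrArg (fun L : B →L[ℝ] B => L (deriv (fun s => kappaT ι E (y s) b) t)) e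
    simpa using e2
  have hsplit : DG ((1 : ℝ), deriv (fun s => kappaT ι E (y s) b) t) =
      DG ((0 : ℝ), deriv (fun s => kappaT ι E (y s) b) t) + DG ((1 : ℝ), (0 : B)) := by
    rw [← map_add, Prod.mk_add_mk, zero_add, add_zero]
  refine ⟨g1 t, ?_, (hbyx t).2.2, hcdiff t, hpdiff t, hgdiff t, hκx, ?_⟩
  · rw [← hcompθ t]
    exact (hbyx t).2.2
  · have hde : deriv (fun s => kappaT ι E (y s * x s) b) t =
        DG (1, deriv (fun s => kappaT ι E (y s) b) t) := by
      have hfe : (fun s => kappaT ι E (y s * x s) b) =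
          fun s => kappaT ι E (x s) (kappaT ι E (y s) b) := funext hcompκ
      rw [hfe]
      exact hchain.deriv
    rw [hde, hsplit, hDGw, hpart_s.deriv]
end

section
/- Let (A, B, E) be a C*-operator-valued probability space, let M > 0, and let t ↦ x_t and t ↦ y_t be maps from ℝ to A, differentiable in the norm of A, such that x_t = x_t*, y_t = y_t*, ‖x_t‖ ≤ M and ‖y_t‖ ≤ M for all t, and such that for every t the ordered pair (x_t − 1, y_t) is monotone independent over B. Then there exists δ > 0 such that for every b ∈ B with ‖b‖ < δ and every t ∈ ℝ: the transforms ρ_{y_t}(b), ρ_{x_t}(ρ_{y_t}(b)), ρ_{x_t y_t}(b) are defined, the relevant functions of t are differentiable, and (d/dt) ρ_{x_t y_t}(b) = (Dρ_{x_t})(ρ_{y_t}(b))((d/dt) ρ_{y_t}(b)) + (∂/∂t ρ_{x_t}(w))|_{w = ρ_{y_t}(b)}, where Dρ_{x_t} denotes the Fréchet derivative of w ↦ ρ_{x_t}(w) and (∂/∂t ρ_{x_t}(w))|_{w = ρ_{y_t}(b)} is the derivative in t of s ↦ ρ_{x_s}(w) evaluated at s = t and w = ρ_{y_t}(b). -/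
open scoped BigOperators

variable {A B : Type*} [CStarAlgebra A] [CStarAlgebra B]

/-- `ϱ_z(b) = E(zb(1 − zb)⁻¹)`. -/
noncomputable def varrhoT (ι : B →⋆ₐ[ℂ] A) (E : A →L[ℂ] B) (z : A) (b : B) : B :=
  E (z * ι b * Ring.inverse (1 - z * ι b))

/-- The ρ-transform `ρ_z(b) = ϱ_z(b)(1 + ϱ_z(b))⁻¹`. -/
noncomputable def rhoT (ι : B →⋆ₐ[ℂ] A) (E : A →L[ℂ] B) (z : A) (b : B) : B :=
  varrhoT ι E z b * Ring.inverse (1 + varrhoT ι E z b)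

namespace MCDAux

/-- alternating list `[p, q, p, q, ...]` with `n` pairs -/
def altL (p q : A) : ℕ → List A
  | 0 => []
  | n + 1 => p :: q :: altL p q n

@[simp] lemma altL_length (p q : A) (n : ℕ) : (altL p q n).length = 2 * n := by
  induction n with
  | zero => rfl
  | succ n ih => simp [altL, ih]; ring

@[simp] lemma altL_prod (p q : A) (n : ℕ) : (altL p q n).prod = (p * q) ^ n := by
  induction n with
  | zero => simp [altL]
  | succ n ih => simp [altL, ih, pow_succ'] ; rw [mul_assoc]

lemma altL_getElem (p q : A) (n : ℕ) (i : ℕ) (hi : i < (altL p q n).length) :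
    (altL p q n)[i] = if Even i then p else q := by
  induction n generalizing i with
  | zero => simp [altL] at hi
  | succ n ih =>
    match i with
    | 0 => simp [altL]
    | 1 => simp [altL]
    | (i + 2) =>
      simp only [altL, List.getElem_cons_succ]
      rw [ih i (by simp [altL] at hi ⊢; omega)]
      by_cases h : Even i <;> simp [h, Nat.even_add_one]

lemma altL_take (p q : A) (n : ℕ) :
    (altL p q (n + 1)).take (2 * n + 1) = altL p q n ++ [p] := by
  induction n with
  | zero => rfl
  | succ n ih =>
    show (p :: q :: altL p q (n+1)).take (2 * (n+1) + 1) = _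
    have : 2 * (n + 1) + 1 = (2 * n + 1) + 2 := by ring
    rw [this]
    simp only [List.take_succ_cons]
    rw [ih]
    rfl

lemma altL_drop (p q : A) (n : ℕ) : (altL p q n).drop (2 * n) = [] := by
  rw [List.drop_eq_nil_iff.mpr]; simp

end MCDAux

namespace MCDAux

lemma ofFn_get_cast (L : List A) (k : ℕ) (h : L.length = k) :
    List.ofFn (fun i : Fin k => L.get (Fin.cast h.symm i)) = L := by
  subst h; exact List.ofFn_get L

lemma hindep_list {ι : B →⋆ₐ[ℂ] A} {E : A →L[ℂ] B} {u v : A}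
    (hind : MonotoneIndepPair ι E u v) (L : List A) (m : ℕ) (hL : L.length = m + 1)
    (idx : ℕ → Bool)
    (hmem : ∀ i (hi : i < L.length), L[i] ∈ (if idx i then bimodGen ι u else bimodGen ι v))
    (halt : ∀ i, idx (i + 1) = !idx i)
    (j : ℕ) (hj : j < L.length) (hjf : idx j = false) :
    E L.prod = E ((L.take j).prod * ι (E (L[j])) * (L.drop (j + 1)).prod) := by
  have key := hind m (fun i : Fin (m+1) => L.get (Fin.cast hL.symm i)) (fun i => idx i.val)
    (fun i => hmem i.val (by simpa [hL] using i.isLt))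
    (fun i => by
      simp only [Fin.coe_castSucc, Fin.val_succ]
      rw [halt i.val]; simp)
    ⟨j, by omega⟩ hjf
  rwa [ofFn_get_cast L (m+1) hL] at key

end MCDAux

namespace MCDAux

lemma self_mem_bimodGen (ι : B →⋆ₐ[ℂ] A) (u : A) : u ∈ bimodGen ι u :=
  NonUnitalAlgebra.subset_adjoin ℂ ⟨1, 1, by simp⟩

lemma mul_iota_mem_bimodGen (ι : B →⋆ₐ[ℂ] A) (u : A) (c : B) : u * ι c ∈ bimodGen ι u :=
  NonUnitalAlgebra.subset_adjoin ℂ ⟨1, c, by simp⟩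

lemma pow_mem' (S : NonUnitalSubalgebra ℂ A) {a : A} (ha : a ∈ S) :
    ∀ k : ℕ, a ^ (k + 1) ∈ S := by
  intro k; induction k with
  | zero => simpa using ha
  | succ k ih => rw [pow_succ]; exact mul_mem ih ha

section core
variable {ι : B →⋆ₐ[ℂ] A} {E : A →L[ℂ] B} {u v g : A}

lemma parity_alt (e : Bool) : ∀ i : ℕ, (xor (decide (Even (i+1))) e) = !(xor (decide (Even i)) e) := by
  intro i
  by_cases h : Even i <;> simp [h, Nat.even_add_one] <;> cases e <;> simp

lemma Pstep (hind : MonotoneIndepPair ι E u v) (hg : g ∈ bimodGen ι v) (n k : ℕ) :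
    E ((u * g) ^ (n + 1) * (u * ι (E g)) ^ k) =
      E ((u * g) ^ n * (u * ι (E g)) ^ (k + 1)) := by
  set c := E g with hc
  have hlen : (altL u g (n+1)).length = 2*n+2 := by simp; ring
  have hdropA : (altL u g (n+1)).drop (2*n+1+1) = [] := by
    have h2 : 2*n+1+1 = 2*(n+1) := by ring
    rw [h2, altL_drop]
  have hgetA : ∀ hh, (altL u g (n+1))[2*n+1]'hh = g := by
    intro hh
    rw [altL_getElem u g (n+1) (2*n+1) hh]; simp [Nat.even_add_one]
  cases k with
  | zero =>
    have key := hindep_list hind (altL u g (n+1)) (2*n+1) (by omega)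
      (fun i => decide (Even i))
      (fun i hi => by
        rw [altL_getElem u g (n+1) i hi]
        by_cases h : Even i <;> simp [h]
        · exact self_mem_bimodGen ι u
        · exact hg)
      (fun i => by by_cases h : Even i <;> simp [h, Nat.even_add_one])
      (2*n+1) (by omega) (by simp [Nat.even_add_one])
    rw [altL_prod, altL_take, hdropA, hgetA] at key
    simp only [List.prod_append, List.prod_nil, List.prod_singleton, mul_one,
      altL_prod] at key
    simp only [pow_zero, mul_one, zero_add, pow_one]
    rw [key, ← hc, mul_assoc]
  | succ k =>
    set T := (u * ι c) ^ (k + 1) with hT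
    have hevT : Even (2*n+2) := ⟨n+1, by ring⟩
    have key := hindep_list hind (altL u g (n+1) ++ [T]) (2*n+2)
      (by simp [hlen])
      (fun i => decide (Even i))
      (fun i hi => by
        rcases lt_or_ge i (2*n+2) with h' | h'
        · rw [List.getElem_append, dif_pos (by omega : i < (altL u g (n+1)).length),
            altL_getElem u g (n+1) i (by omega)]
          by_cases h : Even i <;> simp [h]
          · exact self_mem_bimodGen ι u
          · exact hg
        · have hi2 : i = 2*n+2 := by simp [hlen] at hi; omega
          subst hi2
          rw [List.getElem_append, dif_neg (by omega)]
          simp [hlen, hevT]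
          exact pow_mem' _ (mul_iota_mem_bimodGen ι u c) k)
      (fun i => by by_cases h : Even i <;> simp [h, Nat.even_add_one])
      (2*n+1) (by simp [hlen]) (by simp [Nat.even_add_one])
    rw [List.take_append_of_le_length (by omega), altL_take] at key
    have hdrop : (altL u g (n+1) ++ [T]).drop (2*n+1+1) = [T] := by
      have h2 : 2*n+1+1 = (altL u g (n+1)).length + 0 := by simp [hlen]
      rw [h2, List.drop_append]; simp
    rw [hdrop] at key
    have hget : (altL u g (n+1) ++ [T])[2*n+1]'(by simp [hlen]) = g := by
      rw [List.getElem_append, dif_pos (by omega : 2*n+1 < (altL u g (n+1)).length)]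
      exact hgetA _
    rw [hget] at key
    simp only [List.prod_append, List.prod_nil, List.prod_singleton, mul_one,
      altL_prod] at key
    rw [key, ← hc]
    congr 1
    rw [pow_succ' (u * ι c) (k+1), ← hT]
    simp only [mul_assoc]

lemma Qstep (hind : MonotoneIndepPair ι E u v) (hg : g ∈ bimodGen ι v) (n k : ℕ) :
    E (g * ((u * g) ^ (n + 1) * (u * ι (E g)) ^ k)) =
      E (g * ((u * g) ^ n * (u * ι (E g)) ^ (k + 1))) := by
  set c := E g with hc
  have hlen : (altL u g (n+1)).length = 2*n+2 := by simp; ring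
  have hgetA : ∀ hh, (altL u g (n+1))[2*n+1]'hh = g := by
    intro hh
    rw [altL_getElem u g (n+1) (2*n+1) hh]; simp [Nat.even_add_one]
  cases k with
  | zero =>
    have key := hindep_list hind (g :: altL u g (n+1)) (2*n+2) (by simp [hlen])
      (fun i => !decide (Even i))
      (fun i hi => by
        match i with
        | 0 => simpa using hg
        | (i+1) =>
          rw [List.getElem_cons_succ, altL_getElem u g (n+1) i (by simp [hlen] at hi ⊢; omega)]
          by_cases h : Even i <;> simp [h, Nat.even_add_one]
          · exact self_mem_bimodGen ι u
          · exact hg)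
      (fun i => by by_cases h : Even i <;> simp [h, Nat.even_add_one])
      (2*n+2) (by simp [hlen]) (by simp [Nat.even_add_one])
    have hdrop : (g :: altL u g (n+1)).drop (2*n+2+1) = [] := by
      rw [List.drop_succ_cons]
      have h2 : 2*n+2 = 2*(n+1) := by ring
      rw [h2, altL_drop]
    have htake : (g :: altL u g (n+1)).take (2*n+2) = g :: (altL u g n ++ [u]) := by
      have h2 : 2*n+2 = (2*n+1)+1 := by ring
      rw [h2, List.take_succ_cons, altL_take]
    have hget : (g :: altL u g (n+1))[2*n+2]'(by simp [hlen]) = g := by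
      rw [List.getElem_cons_succ]; exact hgetA _
    rw [htake, hdrop, hget] at key
    simp only [List.prod_cons, List.prod_append, List.prod_nil, List.prod_singleton,
      mul_one, altL_prod] at key
    simp only [pow_zero, mul_one, zero_add, pow_one]
    rw [key, ← hc]
    congr 1
    simp only [mul_assoc]
  | succ k =>
    set T := (u * ι c) ^ (k + 1) with hT
    have hevT : Even (2*n+2) := ⟨n+1, by ring⟩
    have key := hindep_list hind (g :: (altL u g (n+1) ++ [T])) (2*n+3)
      (by simp [hlen])
      (fun i => !decide (Even i))
      (fun i hi => by
        match i with
        | 0 => simpa using hg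
        | (i+1) =>
          rw [List.getElem_cons_succ]
          rcases lt_or_ge i (2*n+2) with h' | h'
          · rw [List.getElem_append, dif_pos (by omega : i < (altL u g (n+1)).length),
              altL_getElem u g (n+1) i (by omega)]
            by_cases h : Even i <;> simp [h, Nat.even_add_one]
            · exact self_mem_bimodGen ι u
            · exact hg
          · have hi2 : i = 2*n+2 := by simp [hlen] at hi; omega
            subst hi2
            rw [List.getElem_append, dif_neg (by omega)]
            simp [hlen, hevT, Nat.even_add_one]
            exact pow_mem' _ (mul_iota_mem_bimodGen ι u c) k)
      (fun i => by by_cases h : Even i <;> simp [h, Nat.even_add_one])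
      (2*n+2) (by simp [hlen]) (by simp [Nat.even_add_one])
    have hdrop : (g :: (altL u g (n+1) ++ [T])).drop (2*n+2+1) = [T] := by
      rw [List.drop_succ_cons]
      have h2 : 2*n+2 = (altL u g (n+1)).length + 0 := by simp [hlen]
      rw [h2, List.drop_append]; simp
    have htake : (g :: (altL u g (n+1) ++ [T])).take (2*n+2) = g :: (altL u g n ++ [u]) := by
      have h2 : 2*n+2 = (2*n+1)+1 := by ring
      rw [h2, List.take_succ_cons, List.take_append_of_le_length (by omega), altL_take]
    have hget : (g :: (altL u g (n+1) ++ [T]))[2*n+2]'(by simp [hlen]) = g := by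
      rw [List.getElem_cons_succ, List.getElem_append,
        dif_pos (by omega : 2*n+1 < (altL u g (n+1)).length)]
      exact hgetA _
    rw [htake, hdrop, hget] at key
    simp only [List.prod_cons, List.prod_append, List.prod_nil, List.prod_singleton,
      mul_one, altL_prod] at key
    rw [key, ← hc]
    congr 1
    rw [pow_succ' (u * ι c) (k+1), ← hT]
    simp only [mul_assoc]

lemma Qbase (hind : MonotoneIndepPair ι E u v) (hg : g ∈ bimodGen ι v)
    (hEl : ∀ (b : B) (a : A), E (ι b * a) = b * E a) (hE1 : E 1 = 1) (k : ℕ) :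
    E (g * (u * ι (E g)) ^ k) = E g * E ((u * ι (E g)) ^ k) := by
  set c := E g with hc
  cases k with
  | zero =>
    have key := hindep_list hind [g] 0 (by simp)
      (fun i => !decide (Even i))
      (fun i hi => by
        match i with
        | 0 => simpa using hg)
      (fun i => by by_cases h : Even i <;> simp [h, Nat.even_add_one])
      0 (by simp) (by simp)
    simp only [List.prod_cons, List.prod_nil, List.take, List.drop, mul_one, one_mul,
      List.getElem_cons_zero] at key
    have h2 : E (ι c) = c := by simpa [hE1] using hEl c 1
    simp only [pow_zero, mul_one]
    rw [hE1, mul_one]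
  | succ k =>
    set T := (u * ι c) ^ (k + 1) with hT
    have key := hindep_list hind [g, T] 1 (by simp)
      (fun i => !decide (Even i))
      (fun i hi => by
        match i with
        | 0 => simpa using hg
        | 1 =>
          simp [Nat.even_add_one]
          exact pow_mem' _ (mul_iota_mem_bimodGen ι u c) k)
      (fun i => by by_cases h : Even i <;> simp [h, Nat.even_add_one])
      0 (by simp) (by simp)
    simp only [List.prod_cons, List.prod_nil, List.take, List.drop, mul_one, one_mul,
      List.getElem_cons_zero] at key
    exact key.trans (hEl _ T)

lemma core_moments (hind : MonotoneIndepPair ι E u v) (hg : g ∈ bimodGen ι v)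
    (hEl : ∀ (b : B) (a : A), E (ι b * a) = b * E a) (hE1 : E 1 = 1) (n : ℕ) :
    E ((u * g) ^ n) = E ((u * ι (E g)) ^ n) ∧
      E (g * (u * g) ^ n) = E g * E ((u * ι (E g)) ^ n) := by
  set c := E g with hc
  have P : ∀ i k, E ((u * g) ^ i * (u * ι c) ^ k) = E ((u * ι c) ^ (i + k)) := by
    intro i
    induction i with
    | zero => intro k; rw [pow_zero, one_mul, zero_add]
    | succ i ih =>
      intro k
      rw [Pstep hind hg i k, ih (k+1)]
      congr 2
      omega
  have Q : ∀ i k, E (g * ((u * g) ^ i * (u * ι c) ^ k)) = E g * E ((u * ι c) ^ (i + k)) := by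
    intro i
    induction i with
    | zero =>
      intro k
      rw [pow_zero, one_mul, zero_add]
      exact Qbase hind hg hEl hE1 k
    | succ i ih =>
      intro k
      rw [Qstep hind hg i k, ih (k+1)]
      congr 3
      omega
  constructor
  · have := P n 0
    simpa using this
  · have := Q n 0
    simpa using this

end core


section comp

variable {ι : B →⋆ₐ[ℂ] A} {E : A →L[ℂ] B}

lemma ring_inverse_mul {M₀ : Type*} [MonoidWithZero M₀] {a b : M₀}
    (ha : IsUnit a) (hb : IsUnit b) :
    Ring.inverse (a * b) = Ring.inverse b * Ring.inverse a := by
  obtain ⟨ua, rfl⟩ := ha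
  obtain ⟨ub, rfl⟩ := hb
  rw [← Units.val_mul, Ring.inverse_unit, Ring.inverse_unit, Ring.inverse_unit,
    mul_inv_rev, Units.val_mul]

lemma varrho_eq_inv_sub_one (ι : B →⋆ₐ[ℂ] A) (E : A →L[ℂ] B) (hE1 : E 1 = 1)
    (z : A) (b : B) (hz : IsUnit (1 - z * ι b)) :
    varrhoT ι E z b = E (Ring.inverse (1 - z * ι b)) - 1 := by
  have h1 : (1 - z * ι b) * Ring.inverse (1 - z * ι b) = 1 := Ring.mul_inverse_cancel _ hz
  have h3 : Ring.inverse (1 - z * ι b) - z * ι b * Ring.inverse (1 - z * ι b) = 1 := by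
    calc Ring.inverse (1 - z * ι b) - z * ι b * Ring.inverse (1 - z * ι b)
        = (1 - z * ι b) * Ring.inverse (1 - z * ι b) := by rw [sub_mul, one_mul]
      _ = 1 := h1
  have h4 : Ring.inverse (1 - z * ι b) = 1 + z * ι b * Ring.inverse (1 - z * ι b) :=
    sub_eq_iff_eq_add.mp h3
  have h2 : z * ι b * Ring.inverse (1 - z * ι b) = Ring.inverse (1 - z * ι b) - 1 := by
    conv_rhs => rw [h4]
    rw [add_sub_cancel_left]
  rw [varrhoT, h2, map_sub, hE1]

lemma comp_varrho (h : IsCStarOVProbSpace ι E) {xx zz : A} {b : B}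
    (hind : MonotoneIndepPair ι E (xx - 1) zz)
    (hw : ‖zz * ι b‖ < 1)
    (hβ : ‖varrhoT ι E zz b‖ < 1)
    (hug : ‖(xx - 1) * (zz * ι b * Ring.inverse (1 - zz * ι b))‖ < 1)
    (huβ : ‖(xx - 1) * ι (varrhoT ι E zz b)‖ < 1) :
    varrhoT ι E (xx * zz) b = varrhoT ι E xx (rhoT ι E zz b) := by
  have hEl : ∀ (c : B) (a : A), E (ι c * a) = c * E a := by
    intro c a
    have := h.E_bimod c 1 a
    simpa using this
  set u : A := xx - 1 with hu
  set w : A := zz * ι b with hwdef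
  set g : A := w * Ring.inverse (1 - w) with hgdef
  have hβg : E g = varrhoT ι E zz b := rfl
  set β : B := varrhoT ι E zz b with hβdef
  have hUw : IsUnit (1 - w) := isUnit_one_sub_of_norm_lt_one hw
  have hUug : IsUnit (1 - u * g) := isUnit_one_sub_of_norm_lt_one hug
  have hUuβ : IsUnit (1 - u * ι β) := isUnit_one_sub_of_norm_lt_one huβ
  have hUν : IsUnit (1 + β) := by
    have he : (1 : B) + β = 1 - (-β) := by rw [sub_neg_eq_add]
    rw [he]
    exact isUnit_one_sub_of_norm_lt_one (by simpa using hβ)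
  -- moments via approximation
  have moments : ∀ n : ℕ, E ((u * g) ^ n) = E ((u * ι (E g)) ^ n) ∧
      E (g * (u * g) ^ n) = E g * E ((u * ι (E g)) ^ n) := by
    intro n
    have hιcont : Continuous ι := h.isometry.continuous
    set gN : ℕ → A := fun N => ∑ m ∈ Finset.range N, w ^ (m + 1) with hgN
    have hmemN : ∀ N, gN N ∈ bimodGen ι zz := by
      intro N
      refine sum_mem fun m _ => pow_mem' _ ?_ m
      exact NonUnitalAlgebra.subset_adjoin ℂ ⟨1, b, by simp [hwdef]⟩
    have hsum : HasSum (fun m : ℕ => w ^ (m + 1)) g := by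
      have h0 := (hasSum_geom_series_inverse w hw).mul_left w
      have he : (fun i : ℕ => w * w ^ i) = fun i : ℕ => w ^ (i + 1) := by
        funext i; rw [← pow_succ']
      rwa [he] at h0
    have htend : Filter.Tendsto gN Filter.atTop (nhds g) := hsum.tendsto_sum_nat
    have hc1 : Continuous fun a : A => E ((u * a) ^ n) :=
      E.continuous.comp ((continuous_const.mul continuous_id).pow n)
    have hc2 : Continuous fun a : A => E ((u * ι (E a)) ^ n) :=
      E.continuous.comp (((continuous_const.mul (hιcont.comp E.continuous)).pow n))
    have hc3 : Continuous fun a : A => E (a * (u * a) ^ n) :=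
      E.continuous.comp (continuous_id.mul ((continuous_const.mul continuous_id).pow n))
    have hc4 : Continuous fun a : A => E a * E ((u * ι (E a)) ^ n) :=
      E.continuous.mul hc2
    have heqN : ∀ N, E ((u * gN N) ^ n) = E ((u * ι (E (gN N))) ^ n) ∧
        E (gN N * (u * gN N) ^ n) = E (gN N) * E ((u * ι (E (gN N))) ^ n) :=
      fun N => core_moments hind (hmemN N) hEl h.E_one n
    have t1 : Filter.Tendsto (fun N => E ((u * gN N) ^ n)) Filter.atTop
        (nhds (E ((u * g) ^ n))) := (hc1.tendsto g).comp htend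
    have t2 : Filter.Tendsto (fun N => E ((u * ι (E (gN N))) ^ n)) Filter.atTop
        (nhds (E ((u * ι (E g)) ^ n))) := (hc2.tendsto g).comp htend
    have t3 : Filter.Tendsto (fun N => E (gN N * (u * gN N) ^ n)) Filter.atTop
        (nhds (E (g * (u * g) ^ n))) := (hc3.tendsto g).comp htend
    have t4 : Filter.Tendsto (fun N => E (gN N) * E ((u * ι (E (gN N))) ^ n)) Filter.atTop
        (nhds (E g * E ((u * ι (E g)) ^ n))) := (hc4.tendsto g).comp htend
    constructor
    · refine tendsto_nhds_unique t1 ?_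
      refine t2.congr ?_
      intro N; exact ((heqN N).1).symm
    · refine tendsto_nhds_unique t3 ?_
      refine t4.congr ?_
      intro N; exact ((heqN N).2).symm
  rw [hβg] at moments
  -- summed identities
  have hS1 : HasSum (fun n : ℕ => (u * g) ^ n) (Ring.inverse (1 - u * g)) :=
    hasSum_geom_series_inverse _ hug
  have hS2 : HasSum (fun n : ℕ => (u * ι β) ^ n) (Ring.inverse (1 - u * ι β)) :=
    hasSum_geom_series_inverse _ huβ
  have sum1 : E (Ring.inverse (1 - u * g)) = E (Ring.inverse (1 - u * ι β)) := by
    have h1 := hS1.mapL E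
    have h2 := hS2.mapL E
    have he : (fun n : ℕ => E ((u * g) ^ n)) = fun n : ℕ => E ((u * ι β) ^ n) :=
      funext fun n => (moments n).1
    rw [he] at h1
    exact h1.unique h2
  have sum2 : E (g * Ring.inverse (1 - u * g)) = β * E (Ring.inverse (1 - u * ι β)) := by
    have h3 := (hS1.mul_left g).mapL E
    have h4 := (hS2.mapL E).mul_left β
    have he : (fun n : ℕ => E (g * (u * g) ^ n)) = fun n : ℕ => β * E ((u * ι β) ^ n) :=
      funext fun n => (moments n).2
    rw [he] at h3
    exact h3.unique h4
  -- algebraic factorizations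
  have hgw : g * (1 - w) = w := by
    rw [hgdef, mul_assoc, Ring.inverse_mul_cancel _ hUw, mul_one]
  have hfact1 : 1 - xx * zz * ι b = (1 - u * g) * (1 - w) := by
    have he : (1 - u * g) * (1 - w) = 1 - w - u * (g * (1 - w)) := by
      rw [sub_mul, one_mul, mul_assoc]
    rw [he, hgw, hwdef, hu, mul_assoc]
    noncomm_ring
  have hUfull : IsUnit (1 - xx * zz * ι b) := by rw [hfact1]; exact hUug.mul hUw
  have hinv1w : Ring.inverse (1 - w) = 1 + g := by
    have h1 : (1 - w) * Ring.inverse (1 - w) = 1 := Ring.mul_inverse_cancel _ hUw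
    have h2 : Ring.inverse (1 - w) - g = 1 := by
      calc Ring.inverse (1 - w) - g
          = (1 - w) * Ring.inverse (1 - w) := by
            rw [hgdef, sub_mul, one_mul]
        _ = 1 := h1
    rw [sub_eq_iff_eq_add] at h2
    rw [h2, add_comm]
  -- left side
  have left_eq : varrhoT ι E (xx * zz) b =
      (1 + β) * E (Ring.inverse (1 - u * ι β)) - 1 := by
    rw [varrho_eq_inv_sub_one ι E h.E_one (xx * zz) b hUfull, hfact1,
      ring_inverse_mul hUug hUw, hinv1w, add_mul, one_mul, map_add, sum1, sum2]
    noncomm_ring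
  -- right side
  set q : B := Ring.inverse (1 + β) with hq
  have hb' : rhoT ι E zz b = β * q := rfl
  have hβq : (1 : B) - β * q = q := by
    have h1 : (1 + β) * q = 1 := Ring.mul_inverse_cancel _ hUν
    have h2 : q + β * q = 1 := by rw [← h1, add_mul, one_mul]
    rw [← h2]
    exact add_sub_cancel_right q (β * q)
  have hq1 : ι q * ι (1 + β) = 1 := by
    rw [← map_mul, Ring.inverse_mul_cancel _ hUν, map_one]
  have hq2 : ι (1 + β) * ι q = 1 := by
    rw [← map_mul, Ring.mul_inverse_cancel _ hUν, map_one]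
  have hUq : IsUnit (ι q) := ⟨⟨ι q, ι (1 + β), hq2.symm ▸ hq1, hq2⟩, rfl⟩
  have hinvq : Ring.inverse (ι q) = ι (1 + β) :=
    Ring.inverse_unit (⟨ι q, ι (1 + β), hq1, hq2⟩ : Aˣ)
  have hfact2 : 1 - xx * ι (rhoT ι E zz b) = (1 - u * ι β) * ι q := by
    rw [hb', map_mul]
    have hxu : xx = u + 1 := by rw [hu]; abel
    have hι : (1 : A) - ι β * ι q = ι q := by
      rw [← map_mul, ← map_one ι, ← map_sub]
      exact congrArg ι hβq
    calc (1 : A) - xx * (ι β * ι q)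
        = (1 - ι β * ι q) - u * (ι β * ι q) := by rw [hxu]; noncomm_ring
      _ = ι q - u * ι β * ι q := by rw [hι, mul_assoc]
      _ = (1 - u * ι β) * ι q := by noncomm_ring
  have hUfull2 : IsUnit (1 - xx * ι (rhoT ι E zz b)) := by
    rw [hfact2]; exact hUuβ.mul hUq
  have right_eq : varrhoT ι E xx (rhoT ι E zz b) =
      (1 + β) * E (Ring.inverse (1 - u * ι β)) - 1 := by
    rw [varrho_eq_inv_sub_one ι E h.E_one xx _ hUfull2, hfact2,
      ring_inverse_mul hUuβ hUq, hinvq, hEl]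
  rw [left_eq, right_eq]

lemma comp_rho (h : IsCStarOVProbSpace ι E) {xx zz : A} {b : B}
    (hind : MonotoneIndepPair ι E (xx - 1) zz)
    (hw : ‖zz * ι b‖ < 1)
    (hβ : ‖varrhoT ι E zz b‖ < 1)
    (hug : ‖(xx - 1) * (zz * ι b * Ring.inverse (1 - zz * ι b))‖ < 1)
    (huβ : ‖(xx - 1) * ι (varrhoT ι E zz b)‖ < 1) :
    rhoT ι E (xx * zz) b = rhoT ι E xx (rhoT ι E zz b) := by
  rw [rhoT, rhoT, comp_varrho h hind hw hβ hug huβ]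

end comp




section analytic

variable {ι : B →⋆ₐ[ℂ] A} {E : A →L[ℂ] B}

lemma norm_one_le_cstar {R : Type*} [NormedRing R] [StarRing R] [CStarRing R] :
    ‖(1 : R)‖ ≤ 1 := by
  have h1 : ‖star (1 : R) * 1‖ = ‖(1 : R)‖ * ‖(1 : R)‖ := CStarRing.norm_star_mul_self
  rw [star_one, one_mul] at h1
  nlinarith [norm_nonneg (1 : R)]

lemma norm_ring_inverse_one_sub_le {R : Type*} [NormedRing R] [HasSummableGeomSeries R]
    (h1 : ‖(1 : R)‖ ≤ 1) {x : R} (hx : ‖x‖ < 1) :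
    ‖Ring.inverse (1 - x)‖ ≤ (1 - ‖x‖)⁻¹ := by
  rw [← geom_series_eq_inverse x hx]
  have := tsum_geometric_le_of_norm_lt_one x hx
  linarith

lemma norm_ring_inverse_one_sub_le_two {R : Type*} [NormedRing R] [HasSummableGeomSeries R]
    (h1 : ‖(1 : R)‖ ≤ 1) {x : R} (hx : ‖x‖ ≤ 1 / 2) :
    ‖Ring.inverse (1 - x)‖ ≤ 2 := by
  refine le_trans (norm_ring_inverse_one_sub_le h1 (by linarith)) ?_
  have h2 : (1 : ℝ) / 2 ≤ 1 - ‖x‖ := by linarith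
  have h3 : (1 - ‖x‖)⁻¹ ≤ (1 / 2 : ℝ)⁻¹ := by
    apply inv_anti₀ (by norm_num) h2
  simpa using h3.trans (by norm_num)

lemma norm_varrho_le (h : IsCStarOVProbSpace ι E) (z : A) (b : B)
    (hzb : ‖z * ι b‖ ≤ 1 / 2) :
    ‖varrhoT ι E z b‖ ≤ 2 * ‖E‖ * ‖z * ι b‖ := by
  have hinv : ‖Ring.inverse (1 - z * ι b)‖ ≤ 2 :=
    norm_ring_inverse_one_sub_le_two norm_one_le_cstar hzb
  calc ‖varrhoT ι E z b‖ ≤ ‖E‖ * ‖z * ι b * Ring.inverse (1 - z * ι b)‖ := E.le_opNorm _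
    _ ≤ ‖E‖ * (‖z * ι b‖ * ‖Ring.inverse (1 - z * ι b)‖) := by
        apply mul_le_mul_of_nonneg_left (norm_mul_le _ _) (norm_nonneg _)
    _ ≤ ‖E‖ * (‖z * ι b‖ * 2) := by
        apply mul_le_mul_of_nonneg_left
          (mul_le_mul_of_nonneg_left hinv (norm_nonneg _)) (norm_nonneg _)
    _ = 2 * ‖E‖ * ‖z * ι b‖ := by ring

lemma norm_rho_le (z : A) (b : B) (hβ : ‖varrhoT ι E z b‖ ≤ 1 / 2) :
    ‖rhoT ι E z b‖ ≤ 2 * ‖varrhoT ι E z b‖ := by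
  have he : (1 : B) + varrhoT ι E z b = 1 - (-(varrhoT ι E z b)) := by
    rw [sub_neg_eq_add]
  have hinv : ‖Ring.inverse (1 + varrhoT ι E z b)‖ ≤ 2 := by
    rw [he]
    exact norm_ring_inverse_one_sub_le_two norm_one_le_cstar (by simpa using hβ)
  calc ‖rhoT ι E z b‖ ≤ ‖varrhoT ι E z b‖ * ‖Ring.inverse (1 + varrhoT ι E z b)‖ :=
      norm_mul_le _ _
    _ ≤ ‖varrhoT ι E z b‖ * 2 := mul_le_mul_of_nonneg_left hinv (norm_nonneg _)
    _ = 2 * ‖varrhoT ι E z b‖ := by ring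

lemma diffPsi (h : IsCStarOVProbSpace ι E) (p₀ : A × B)
    (h1 : IsUnit (1 - p₀.1 * ι p₀.2)) (h2 : IsUnit (1 + varrhoT ι E p₀.1 p₀.2)) :
    DifferentiableAt ℂ (fun p : A × B => rhoT ι E p.1 p.2) p₀ := by
  have hιd : Differentiable ℂ (⇑ι : B → A) := by
    let ιL : B →L[ℂ] A := ⟨ι.toAlgHom.toLinearMap, h.isometry.continuous⟩
    exact ιL.differentiable
  have hm : DifferentiableAt ℂ (fun p : A × B => p.1 * ι p.2) p₀ :=
    differentiableAt_fst.mul ((hιd.differentiableAt).comp p₀ differentiableAt_snd)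
  have hv : DifferentiableAt ℂ (fun p : A × B => varrhoT ι E p.1 p.2) p₀ := by
    simp only [varrhoT]
    exact DifferentiableAt.comp p₀ E.differentiableAt
      (hm.mul (((differentiableAt_const (1 : A)).sub hm).inverse h1))
  simp only [rhoT]
  exact hv.mul (((differentiableAt_const (1 : B)).add hv).inverse h2)

end analytic

end MCDAux

set_option maxHeartbeats 1000000 in
open MCDAux in
/-- For norm-differentiable, uniformly bounded, selfadjoint paths `t ↦ x_t`, `t ↦ y_t` in a
C*-operator-valued probability space `(A, B, E)` such that `(x_t − 1, y_t)` is monotone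
independent over `B` for all `t`, there is `δ > 0` such that for all `‖b‖ < δ` and all `t` the
ρ-transforms are defined, the relevant functions of `t` are differentiable, and
`(d/dt) ρ_{x_t y_t}(b) = (Dρ_{x_t})(ρ_{y_t}(b))((d/dt) ρ_{y_t}(b)) + (∂/∂t ρ_{x_t}(w))|_{w = ρ_{y_t}(b)}`. -/
theorem monotone_convolution_differentiable_paths_rho
    (ι : B →⋆ₐ[ℂ] A) (E : A →L[ℂ] B) (h : IsCStarOVProbSpace ι E)
    (M : ℝ) (hM : 0 < M) (x y : ℝ → A)
    (hxdiff : Differentiable ℝ x) (hydiff : Differentiable ℝ y)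
    (hxsa : ∀ t, star (x t) = x t) (hysa : ∀ t, star (y t) = y t)
    (hxM : ∀ t, ‖x t‖ ≤ M) (hyM : ∀ t, ‖y t‖ ≤ M)
    (hindep : ∀ t, MonotoneIndepPair ι E (x t - 1) (y t)) :
    ∃ δ > (0 : ℝ), ∀ b : B, ‖b‖ < δ → ∀ t : ℝ,
      IsUnit (1 + varrhoT ι E (y t) b) ∧
      IsUnit (1 + varrhoT ι E (x t) (rhoT ι E (y t) b)) ∧
      IsUnit (1 + varrhoT ι E (x t * y t) b) ∧
      DifferentiableAt ℝ (fun s => rhoT ι E (y s) b) t ∧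
      DifferentiableAt ℝ (fun s => rhoT ι E (x s) (rhoT ι E (y t) b)) t ∧
      DifferentiableAt ℝ (fun s => rhoT ι E (x s * y s) b) t ∧
      DifferentiableAt ℂ (rhoT ι E (x t)) (rhoT ι E (y t) b) ∧
      deriv (fun s => rhoT ι E (x s * y s) b) t =
        fderiv ℂ (rhoT ι E (x t)) (rhoT ι E (y t) b)
            (deriv (fun s => rhoT ι E (y s) b) t) +
          deriv (fun s => rhoT ι E (x s) (rhoT ι E (y t) b)) t := by
  have hEnn : (0:ℝ) ≤ ‖E‖ := norm_nonneg _
  obtain ⟨C, hCdef⟩ : ∃ C : ℝ, C = ‖E‖ + 1 := ⟨_, rfl⟩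
  obtain ⟨K, hKdef⟩ : ∃ K : ℝ, K = M + 1 := ⟨_, rfl⟩
  have hC1 : 1 ≤ C := by rw [hCdef]; linarith
  have hK1 : 1 ≤ K := by rw [hKdef]; linarith
  have hMK : M ≤ K := by rw [hKdef]; linarith
  have hEC : ‖E‖ ≤ C := by rw [hCdef]; linarith
  have hCpos : 0 < C := by linarith
  have hKpos : 0 < K := by linarith
  refine ⟨(16 * C^2 * K^3)⁻¹, inv_pos.mpr (by positivity), ?_⟩
  intro b hb t
  have hb0 : (0:ℝ) ≤ ‖b‖ := norm_nonneg _
  have hmaster : 16 * C^2 * K^3 * ‖b‖ < 1 := by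
    have hpos : (0:ℝ) < 16 * C^2 * K^3 := by positivity
    calc 16 * C^2 * K^3 * ‖b‖ < 16 * C^2 * K^3 * (16 * C^2 * K^3)⁻¹ :=
          mul_lt_mul_of_pos_left hb hpos
      _ = 1 := mul_inv_cancel₀ (ne_of_gt hpos)
  have hιn : ∀ c : B, ‖ι c‖ = ‖c‖ := fun c =>
    h.isometry.norm_map_of_map_zero (map_zero ι) c
  -- numeric ladder
  have n2 : (0:ℝ) ≤ K*‖b‖ := by positivity
  have n1 : (0:ℝ) ≤ K*(K*‖b‖) := by positivity
  have n0 : (0:ℝ) ≤ C*(K*(K*‖b‖)) := by positivity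
  have q4 : C*(C*(K*(K*‖b‖))) ≤ 1/16 := by
    nlinarith [mul_nonneg (sub_nonneg.mpr hK1) (by positivity : (0:ℝ) ≤ C*C*K*K*‖b‖)]
  have q3 : C*(K*(K*‖b‖)) ≤ 1/16 := by
    nlinarith [mul_nonneg (sub_nonneg.mpr hC1) n0]
  have q2 : C*(K*‖b‖) ≤ 1/16 := by
    nlinarith [mul_nonneg (sub_nonneg.mpr hK1) (by positivity : (0:ℝ) ≤ C*(K*‖b‖))]
  have q1 : K*‖b‖ ≤ 1/16 := by
    nlinarith [mul_nonneg (sub_nonneg.mpr hC1) n2]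
  have q1' : K*(K*‖b‖) ≤ 1/16 := by
    nlinarith [mul_nonneg (sub_nonneg.mpr hC1) n1]
  -- uniform bounds, valid at every time s
  have bounds : ∀ s : ℝ,
      ‖y s * ι b‖ < 1 ∧
      ‖varrhoT ι E (y s) b‖ < 1 ∧
      ‖x s * ι (rhoT ι E (y s) b)‖ < 1 ∧
      ‖varrhoT ι E (x s) (rhoT ι E (y s) b)‖ < 1 ∧
      ‖x s * y s * ι b‖ < 1 ∧
      ‖varrhoT ι E (x s * y s) b‖ < 1 ∧
      ‖(x s - 1) * (y s * ι b * Ring.inverse (1 - y s * ι b))‖ < 1 ∧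
      ‖(x s - 1) * ι (varrhoT ι E (y s) b)‖ < 1 := by
    intro s
    have hxK : ‖x s‖ ≤ K := (hxM s).trans hMK
    have hyK : ‖y s‖ ≤ K := (hyM s).trans hMK
    have huK : ‖x s - 1‖ ≤ K := by
      calc ‖x s - 1‖ ≤ ‖x s‖ + ‖(1:A)‖ := norm_sub_le _ _
        _ ≤ M + 1 := add_le_add (hxM s) norm_one_le_cstar
        _ = K := hKdef.symm
    have e1 : ‖y s * ι b‖ ≤ K * ‖b‖ := by
      calc ‖y s * ι b‖ ≤ ‖y s‖ * ‖ι b‖ := norm_mul_le _ _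
        _ ≤ K * ‖b‖ := by rw [hιn b]; exact mul_le_mul_of_nonneg_right hyK hb0
    have e1' : ‖y s * ι b‖ ≤ 1/2 := by linarith
    have e2 : ‖varrhoT ι E (y s) b‖ ≤ 2 * (C * (K * ‖b‖)) := by
      refine (norm_varrho_le h (y s) b e1').trans ?_
      linarith [mul_le_mul hEC e1 (norm_nonneg (y s * ι b)) hCpos.le]
    have e2' : ‖varrhoT ι E (y s) b‖ ≤ 1/2 := by linarith
    have e3 : ‖rhoT ι E (y s) b‖ ≤ 4 * (C * (K * ‖b‖)) := by
      refine (norm_rho_le (y s) b e2').trans ?_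
      linarith
    have e4 : ‖x s * ι (rhoT ι E (y s) b)‖ ≤ 4 * (C * (K * (K * ‖b‖))) := by
      calc ‖x s * ι (rhoT ι E (y s) b)‖ ≤ ‖x s‖ * ‖ι (rhoT ι E (y s) b)‖ := norm_mul_le _ _
        _ = ‖x s‖ * ‖rhoT ι E (y s) b‖ := by rw [hιn]
        _ ≤ K * (4 * (C * (K * ‖b‖))) := mul_le_mul hxK e3 (norm_nonneg _) (by linarith)
        _ = 4 * (C * (K * (K * ‖b‖))) := by ring
    have e4' : ‖x s * ι (rhoT ι E (y s) b)‖ ≤ 1/2 := by linarith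
    have e5 : ‖varrhoT ι E (x s) (rhoT ι E (y s) b)‖ ≤ 8 * (C * (C * (K * (K * ‖b‖)))) := by
      refine (norm_varrho_le h (x s) _ e4').trans ?_
      linarith [mul_le_mul hEC e4 (norm_nonneg (x s * ι (rhoT ι E (y s) b))) hCpos.le]
    have e6 : ‖x s * y s * ι b‖ ≤ K * (K * ‖b‖) := by
      calc ‖x s * y s * ι b‖ = ‖x s * (y s * ι b)‖ := by rw [mul_assoc]
        _ ≤ ‖x s‖ * ‖y s * ι b‖ := norm_mul_le _ _
        _ ≤ K * (K * ‖b‖) := mul_le_mul hxK e1 (norm_nonneg _) (by linarith)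
    have e6' : ‖x s * y s * ι b‖ ≤ 1/2 := by linarith
    have e7 : ‖varrhoT ι E (x s * y s) b‖ ≤ 2 * (C * (K * (K * ‖b‖))) := by
      refine (norm_varrho_le h (x s * y s) b e6').trans ?_
      linarith [mul_le_mul hEC e6 (norm_nonneg (x s * y s * ι b)) hCpos.le]
    have hg : ‖y s * ι b * Ring.inverse (1 - y s * ι b)‖ ≤ 2 * (K * ‖b‖) := by
      have hinv : ‖Ring.inverse (1 - y s * ι b)‖ ≤ 2 :=
        norm_ring_inverse_one_sub_le_two norm_one_le_cstar e1'
      calc ‖y s * ι b * Ring.inverse (1 - y s * ι b)‖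
          ≤ ‖y s * ι b‖ * ‖Ring.inverse (1 - y s * ι b)‖ := norm_mul_le _ _
        _ ≤ (K * ‖b‖) * 2 := mul_le_mul e1 hinv (norm_nonneg _) n2
        _ = 2 * (K * ‖b‖) := by ring
    have e8 : ‖(x s - 1) * (y s * ι b * Ring.inverse (1 - y s * ι b))‖
        ≤ 2 * (K * (K * ‖b‖)) := by
      calc ‖(x s - 1) * (y s * ι b * Ring.inverse (1 - y s * ι b))‖
          ≤ ‖x s - 1‖ * ‖y s * ι b * Ring.inverse (1 - y s * ι b)‖ := norm_mul_le _ _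
        _ ≤ K * (2 * (K * ‖b‖)) := mul_le_mul huK hg (norm_nonneg _) (by linarith)
        _ = 2 * (K * (K * ‖b‖)) := by ring
    have e9 : ‖(x s - 1) * ι (varrhoT ι E (y s) b)‖ ≤ 2 * (C * (K * (K * ‖b‖))) := by
      calc ‖(x s - 1) * ι (varrhoT ι E (y s) b)‖
          ≤ ‖x s - 1‖ * ‖ι (varrhoT ι E (y s) b)‖ := norm_mul_le _ _
        _ = ‖x s - 1‖ * ‖varrhoT ι E (y s) b‖ := by rw [hιn]
        _ ≤ K * (2 * (C * (K * ‖b‖))) := mul_le_mul huK e2 (norm_nonneg _) (by linarith)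
        _ = 2 * (C * (K * (K * ‖b‖))) := by ring
    refine ⟨by linarith, by linarith, by linarith, by linarith, by linarith,
      by linarith, by linarith, by linarith⟩
  -- units
  have unit_add : ∀ v : B, ‖v‖ < 1 → IsUnit (1 + v) := by
    intro v hv
    rw [← sub_neg_eq_add]
    exact isUnit_one_sub_of_norm_lt_one (by simpa using hv)
  obtain ⟨B1, B2, B3, B4, B5, B6, B7, B8⟩ := bounds t
  have U1 : IsUnit (1 + varrhoT ι E (y t) b) := unit_add _ B2
  have U2 : IsUnit (1 + varrhoT ι E (x t) (rhoT ι E (y t) b)) := unit_add _ B4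
  have U3 : IsUnit (1 + varrhoT ι E (x t * y t) b) := unit_add _ B6
  -- composition identity at all times
  have Hcomp : ∀ s : ℝ, rhoT ι E (x s * y s) b = rhoT ι E (x s) (rhoT ι E (y s) b) := by
    intro s
    obtain ⟨B1, B2, B3, B4, B5, B6, B7, B8⟩ := bounds s
    exact comp_rho h (hindep s) B1 B2 B7 B8
  -- differentiability
  have hΨy : DifferentiableAt ℂ (fun p : A × B => rhoT ι E p.1 p.2) (y t, b) :=
    diffPsi h (y t, b) (isUnit_one_sub_of_norm_lt_one B1) U1
  have hΨx : DifferentiableAt ℂ (fun p : A × B => rhoT ι E p.1 p.2)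
      (x t, rhoT ι E (y t) b) :=
    diffPsi h (x t, rhoT ι E (y t) b) (isUnit_one_sub_of_norm_lt_one B3) U2
  have d4 : DifferentiableAt ℝ (fun s => rhoT ι E (y s) b) t := by
    have := (hΨy.restrictScalars ℝ).comp t
      (((hydiff t).prodMk (differentiableAt_const b)) :
        DifferentiableAt ℝ (fun s => ((y s, b) : A × B)) t)
    exact this
  have hw' : HasDerivAt (fun s => rhoT ι E (y s) b) (deriv (fun s => rhoT ι E (y s) b) t) t :=
    d4.hasDerivAt
  have hx' : HasDerivAt x (deriv x t) t := (hxdiff t).hasDerivAt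
  have hΨ := hΨx.hasFDerivAt
  set D := fderiv ℂ (fun p : A × B => rhoT ι E p.1 p.2) (x t, rhoT ι E (y t) b) with hD
  -- full path
  have hpair : HasDerivAt (fun s => ((x s, rhoT ι E (y s) b) : A × B))
      (deriv x t, deriv (fun s => rhoT ι E (y s) b) t) t := hx'.prodMk hw'
  have hcomp1 : HasDerivAt (fun s => rhoT ι E (x s) (rhoT ι E (y s) b))
      ((D.restrictScalars ℝ) (deriv x t, deriv (fun s => rhoT ι E (y s) b) t)) t :=
    by have := (hΨ.restrictScalars ℝ).comp_hasDerivAt t hpair; exact this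
  have hfun : (fun s => rhoT ι E (x s * y s) b)
      = fun s => rhoT ι E (x s) (rhoT ι E (y s) b) := funext fun s => Hcomp s
  have hcomp1' : HasDerivAt (fun s => rhoT ι E (x s * y s) b)
      ((D.restrictScalars ℝ) (deriv x t, deriv (fun s => rhoT ι E (y s) b) t)) t := by
    rw [hfun]; exact hcomp1
  have d6 : DifferentiableAt ℝ (fun s => rhoT ι E (x s * y s) b) t :=
    hcomp1'.differentiableAt
  -- partial in s
  have hpair2 : HasDerivAt (fun s => ((x s, rhoT ι E (y t) b) : A × B))
      (deriv x t, 0) t := hx'.prodMk (hasDerivAt_const t _)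
  have hcomp2 : HasDerivAt (fun s => rhoT ι E (x s) (rhoT ι E (y t) b))
      ((D.restrictScalars ℝ) (deriv x t, 0)) t :=
    by have := (hΨ.restrictScalars ℝ).comp_hasDerivAt t hpair2; exact this
  have d5 : DifferentiableAt ℝ (fun s => rhoT ι E (x s) (rhoT ι E (y t) b)) t :=
    hcomp2.differentiableAt
  -- partial in b
  have hconst : HasFDerivAt (fun v : B => ((x t, v) : A × B))
      (((0 : B →L[ℂ] A)).prod (ContinuousLinearMap.id ℂ B)) (rhoT ι E (y t) b) :=
    (hasFDerivAt_const (x t) _).prodMk (hasFDerivAt_id _)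
  have hinr : HasFDerivAt (rhoT ι E (x t))
      (D.comp (((0 : B →L[ℂ] A)).prod (ContinuousLinearMap.id ℂ B))) (rhoT ι E (y t) b) :=
    hΨ.comp (rhoT ι E (y t) b) hconst
  have d7 : DifferentiableAt ℂ (rhoT ι E (x t)) (rhoT ι E (y t) b) :=
    hinr.differentiableAt
  -- the derivative identity
  have hderiv_eq : deriv (fun s => rhoT ι E (x s * y s) b) t =
      fderiv ℂ (rhoT ι E (x t)) (rhoT ι E (y t) b)
        (deriv (fun s => rhoT ι E (y s) b) t) +
      deriv (fun s => rhoT ι E (x s) (rhoT ι E (y t) b)) t := by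
    rw [hcomp1'.deriv, hcomp2.deriv, hinr.fderiv]
    rw [ContinuousLinearMap.coe_restrictScalars', ContinuousLinearMap.comp_apply,
      ContinuousLinearMap.prod_apply, ContinuousLinearMap.zero_apply,
      ContinuousLinearMap.id_apply]
    rw [← map_add]
    congr 1
    simp [Prod.ext_iff]
  exact ⟨U1, U2, U3, d4, d5, d6, d7, hderiv_eq⟩
end
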